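/- arXiv:2310.07175 — 5 statements merged into one kernel-verified Lean document; each statement's English description precedes it below -/
import Mathlib

section
/- Let R be a commutative ring and N a free direct summand of R^n of rank n-1. Then N is cofree, i.e., the quotient R^n/N is a free R-module (necessarily of rank 1). -/
noncomputable section

open Matrix Submodule

variable {m : ℕ}

noncomputable def psiAux (A : Type*) [CommRing A] (u : Fin m → (Fin (m+1) → A)) :
    (Fin (m+1) → A) →ₗ[A] A :=
  (Matrix.detRowAlternating (n := Fin (m+1)) (R := A)).toMultilinearMap.toLinearMap
    (Fin.snoc u 0) (Fin.last m)

lemma snoc_update {A : Type*} (u : Fin m → (Fin (m+1) → A)) (w x : Fin (m+1) → A) :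
    Function.update (Fin.snoc u w : Fin (m+1) → (Fin (m+1) → A)) (Fin.last m) x
      = Fin.snoc u x := by
  funext j
  refine Fin.lastCases ?_ (fun i => ?_) j
  · simp
  · have hne : (i : Fin m).castSucc ≠ Fin.last m := (Fin.castSucc_lt_last i).ne
    simp [Function.update_of_ne hne]

lemma psiAux_apply {A : Type*} [CommRing A] (u : Fin m → (Fin (m+1) → A)) (x : Fin (m+1) → A) :
    psiAux A u x = Matrix.det (Matrix.of (Fin.snoc u x)) := by
  simp only [psiAux, MultilinearMap.toLinearMap, LinearMap.coe_mk, AddHom.coe_mk]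
  rw [snoc_update]
  rfl

lemma psiAux_self {A : Type*} [CommRing A] (u : Fin m → (Fin (m+1) → A)) (i : Fin m) :
    psiAux A u (u i) = 0 := by
  rw [psiAux_apply]
  refine Matrix.det_zero_of_row_eq (i := i.castSucc) (j := Fin.last m)
    (Fin.castSucc_lt_last i).ne ?_
  show (Fin.snoc u (u i) : Fin (m+1) → (Fin (m+1) → A)) i.castSucc
    = (Fin.snoc u (u i) : Fin (m+1) → (Fin (m+1) → A)) (Fin.last m)
  rw [Fin.snoc_castSucc, Fin.snoc_last]

lemma psiAux_map {A B : Type*} [CommRing A] [CommRing B] (f : A →+* B)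
    (u : Fin m → (Fin (m+1) → A)) (x : Fin (m+1) → A) :
    psiAux B (fun i => f ∘ u i) (f ∘ x) = f (psiAux A u x) := by
  rw [psiAux_apply, psiAux_apply, RingHom.map_det]
  congr 1
  funext j k
  refine Fin.lastCases ?_ (fun i => ?_) j <;>
    simp [RingHom.mapMatrix_apply]

set_option maxHeartbeats 1000000 in
/-- The core local statement. -/
lemma core_local {R : Type*} [CommRing R] [Nontrivial R] {m : ℕ}
    (N C : Submodule R (Fin (m+1) → R)) (hc : IsCompl N C)
    (bv : Fin m → (Fin (m+1) → R)) (hbi : LinearIndependent R bv)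
    (hbs : Submodule.span R (Set.range bv) = N)
    (P : Ideal R) (hP : P.IsMaximal) :
    (∃ x₀, psiAux R bv x₀ ∉ P) ∧
      (∀ x, psiAux R bv x = 0 → ∃ t ∈ P.primeCompl, t • x ∈ N) := by
  haveI := hP.isPrime
  set S := Localization.AtPrime P with hS
  set f : R →+* S := algebraMap R S with hf
  set L : (Fin (m+1) → R) →ₗ[R] (Fin (m+1) → S) :=
    LinearMap.compLeft (Algebra.linearMap R S) (Fin (m+1)) with hL
  have hLapp : ∀ x, L x = f ∘ x := fun x => rfl
  -- clearing denominators
  have hclear : ∀ y : Fin (m+1) → S, ∃ (s : P.primeCompl) (x : Fin (m+1) → R),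
      f s • y = L x := by
    intro y
    obtain ⟨b, hb⟩ := IsLocalization.exist_integer_multiples P.primeCompl Finset.univ y
    choose x hx using fun i => hb i (Finset.mem_univ i)
    refine ⟨b, x, funext fun i => ?_⟩
    rw [Pi.smul_apply, hLapp, Function.comp_apply, hx i, algebraMap_smul]
  -- L x = 0 implies torsion
  have hLzero : ∀ x, L x = 0 → ∃ t : P.primeCompl, (t : R) • x = 0 := by
    intro x hx
    have h : ∀ i, f (x i) = 0 := fun i => congrFun hx i
    choose t ht using fun i =>
      (IsLocalization.map_eq_zero_iff P.primeCompl S (x i)).mp (h i)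
    refine ⟨∏ i, t i, funext fun j => ?_⟩
    obtain ⟨u, hu⟩ := Finset.dvd_prod_of_mem (fun i => (t i : R)) (Finset.mem_univ j)
    have : ((∏ i, t i : P.primeCompl) : R) = ∏ i, (t i : R) := by
      push_cast; rfl
    rw [Pi.smul_apply, Pi.zero_apply, smul_eq_mul, this, hu, mul_right_comm, ht j, zero_mul]
  set N' : Submodule S (Fin (m+1) → S) := span S (L '' N) with hN'
  set C' : Submodule S (Fin (m+1) → S) := span S (L '' C) with hC'
  -- span over S of image of an R-span
  have hspanL : ∀ (s : Set (Fin (m+1) → R)),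
      span S (L '' (span R s : Submodule R _)) = span S (L '' s) := by
    intro s
    refine le_antisymm (span_le.mpr ?_) (span_mono (Set.image_mono subset_span))
    rintro _ ⟨x, hx, rfl⟩
    induction hx using Submodule.span_induction with
    | mem z hz => exact subset_span ⟨z, hz, rfl⟩
    | zero => simpa using (span S (L '' s)).zero_mem
    | add a b _ _ ha hb => rw [map_add]; exact add_mem ha hb
    | smul r a _ ha =>
        rw [LinearMap.map_smul, ← algebraMap_smul S r (L a)]
        exact smul_mem _ _ ha
  -- N' is spanned by the L ∘ bv
  have hN'span : N' = span S (Set.range (L ∘ bv)) := by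
    rw [hN', ← hbs, hspanL, ← Set.range_comp]
  -- sup is everything
  have hsup : N' ⊔ C' = ⊤ := by
    rw [eq_top_iff]
    rintro y -
    obtain ⟨s, x, hsx⟩ := hclear y
    have hx : x ∈ N ⊔ C := by rw [hc.sup_eq_top]; trivial
    obtain ⟨u, hu, v, hv, huv⟩ := Submodule.mem_sup.mp hx
    have hmem : f s • y ∈ N' ⊔ C' := by
      rw [hsx, ← huv, map_add]
      exact add_mem (Submodule.mem_sup_left (subset_span ⟨u, hu, rfl⟩ : L u ∈ N'))
        (Submodule.mem_sup_right (subset_span ⟨v, hv, rfl⟩ : L v ∈ C'))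
    obtain ⟨w, hw⟩ := IsLocalization.map_units S s
    have : y = (↑w⁻¹ : S) • (f s • y) := by
      rw [smul_smul, ← hw]
      simp
    rw [this]
    exact smul_mem _ _ hmem
  -- the projection onto C with kernel N, over R and over S
  set pr : (Fin (m+1) → R) →ₗ[R] (Fin (m+1) → R) :=
    (Submodule.subtype C) ∘ₗ (Submodule.projectionOnto C N hc.symm) with hpr
  have hprN : ∀ u ∈ N, pr u = 0 := by
    intro u hu
    simp [hpr, Submodule.projectionOnto_apply_right hc.symm ⟨u, hu⟩]
  have hprC : ∀ v ∈ C, pr v = v := by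
    intro v hv
    simp [hpr, Submodule.projectionOnto_apply_left hc.symm ⟨v, hv⟩]
  set Mpr : Matrix (Fin (m+1)) (Fin (m+1)) R := LinearMap.toMatrix' pr with hMpr
  set pr' : (Fin (m+1) → S) →ₗ[S] (Fin (m+1) → S) :=
    Matrix.toLin' (Mpr.map f) with hpr'
  have hcommpr : ∀ x, pr' (L x) = L (pr x) := by
    intro x
    have h1 : pr x = Matrix.toLin' Mpr x := by rw [hMpr, Matrix.toLin'_toMatrix']
    funext j
    rw [hLapp, hpr', Matrix.toLin'_apply, hLapp, Function.comp_apply, h1,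
      Matrix.toLin'_apply, RingHom.map_mulVec]
  have hdisj : Disjoint N' C' := by
    have hN'ker : N' ≤ LinearMap.ker pr' := by
      rw [hN']
      refine span_le.mpr ?_
      rintro _ ⟨u, hu, rfl⟩
      simp only [SetLike.mem_coe, LinearMap.mem_ker]
      rw [hcommpr, hprN u hu, map_zero]
    have hC'fix : C' ≤ LinearMap.ker (pr' - LinearMap.id) := by
      rw [hC']
      refine span_le.mpr ?_
      rintro _ ⟨v, hv, rfl⟩
      simp only [SetLike.mem_coe, LinearMap.mem_ker, LinearMap.sub_apply, LinearMap.id_apply,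
        sub_eq_zero]
      rw [hcommpr, hprC v hv]
    rw [disjoint_def]
    intro y hy1 hy2
    have h1 : pr' y = 0 := hN'ker hy1
    have h2 : pr' y - y = 0 := hC'fix hy2
    rw [h1, zero_sub, neg_eq_zero] at h2
    exact h2
  have hcompl' : IsCompl N' C' := ⟨hdisj, codisjoint_iff.mpr hsup⟩
  -- linear independence of L ∘ bv over S
  have hindepS : LinearIndependent S (⇑L ∘ bv) := by
    rw [Fintype.linearIndependent_iff]
    intro g hg
    obtain ⟨s, hs⟩ := IsLocalization.exist_integer_multiples P.primeCompl Finset.univ g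
    choose a ha using fun i => hs i (Finset.mem_univ i)
    have hsum : L (∑ i, a i • bv i) = 0 := by
      rw [map_sum]
      have : ∀ i, L (a i • bv i) = f (a i) • L (bv i) := by
        intro i
        rw [LinearMap.map_smul, algebraMap_smul]
      simp only [Function.comp_apply] at hg
      simp_rw [this, hf, ha, smul_assoc]
      rw [← Finset.smul_sum, hg, smul_zero]
    obtain ⟨t, ht⟩ := hLzero _ hsum
    rw [Finset.smul_sum] at ht
    simp_rw [smul_smul] at ht
    have hta : ∀ i, (t : R) * a i = 0 :=
      Fintype.linearIndependent_iff.mp hbi _ ht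
    intro i
    have h1 : f ((t : R) * a i) = 0 := by rw [hta i, map_zero]
    rw [_root_.map_mul] at h1
    have h2 : f (a i) = 0 :=
      ((IsLocalization.map_units S t).mul_right_eq_zero).mp h1
    have h3 : (s : R) • g i = 0 := by rw [← ha i, h2]
    rw [← algebraMap_smul S (s : R) (g i)] at h3
    exact ((IsLocalization.map_units S s).smul_left_cancel).mp (by simpa using h3)
  -- basis of N'
  have hmemN' : ∀ i, L (bv i) ∈ N' := by
    intro i
    rw [hN']
    exact subset_span ⟨bv i, hbs ▸ subset_span ⟨i, rfl⟩, rfl⟩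
  have hindepN' : LinearIndependent S (fun i => (⟨L (bv i), hmemN' i⟩ : N')) := by
    refine LinearIndependent.of_comp N'.subtype ?_
    convert hindepS using 1
    rfl
  have hspanN' : ⊤ ≤ span S (Set.range (fun i => (⟨L (bv i), hmemN' i⟩ : N'))) := by
    refine le_of_eq (Submodule.map_injective_of_injective N'.injective_subtype ?_).symm
    rw [Submodule.map_span, Submodule.map_subtype_top, ← Set.range_comp]
    exact hN'span.symm
  set bN : Module.Basis (Fin m) S N' := Module.Basis.mk hindepN' hspanN' with hbN
  haveI : Module.Free S N' := Module.Free.of_basis bN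
  haveI : Module.Finite S N' := Module.Finite.of_basis bN
  -- C' is finite projective, hence free over the local ring S
  set prC : (Fin (m+1) → S) →ₗ[S] C' := Submodule.projectionOnto C' N' hcompl'.symm
    with hprC'
  have hprCid : ∀ z : C', prC (z : Fin (m+1) → S) = z := fun z =>
    Submodule.projectionOnto_apply_left hcompl'.symm z
  haveI : Module.Finite S C' :=
    Module.Finite.of_surjective prC (fun z => ⟨(z : Fin (m+1) → S), hprCid z⟩)
  haveI : Module.Projective S C' :=
    Module.Projective.of_split C'.subtype prC (by
      ext z
      exact congrFun (congrArg Subtype.val (hprCid z)) _)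
  haveI : Module.FinitePresentation S C' := Module.finitePresentation_of_projective S C'
  haveI : Module.Free S C' := Module.free_of_flat_of_isLocalRing
  -- rank count : finrank C' = 1
  have hrankC' : Module.finrank S C' = 1 := by
    have h1 : Module.finrank S (Fin (m+1) → S) = m + 1 := by
      rw [Module.finrank_pi, Fintype.card_fin]
    have h2 : Module.finrank S (N' × C') = m + 1 := by
      rw [(Submodule.prodEquivOfIsCompl N' C' hcompl').finrank_eq, h1]
    rw [Module.finrank_prod, Module.finrank_eq_card_basis bN, Fintype.card_fin] at h2
    omega
  -- a generator of C'
  set κ := Module.Free.ChooseBasisIndex S C' with hκ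
  set bC : Module.Basis κ S C' := Module.Free.chooseBasis S C' with hbC
  have hcard : Fintype.card κ = 1 := by
    rw [← Module.finrank_eq_card_chooseBasisIndex, hrankC']
  obtain ⟨j0, hj0⟩ := Fintype.card_eq_one_iff.mp hcard
  set c : Fin (m+1) → S := ((bC j0 : C') : Fin (m+1) → S) with hcdef
  have hcC : c ∈ C' := (bC j0 : C').2
  have hC'le : C' ≤ span S {c} := by
    intro y hy
    haveI : Unique κ := ⟨⟨j0⟩, hj0⟩
    have := Module.Basis.sum_repr bC ⟨y, hy⟩
    rw [Fintype.sum_unique] at this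
    have hdef : (default : κ) = j0 := hj0 default
    rw [hdef] at this
    have : y = bC.repr ⟨y, hy⟩ j0 • c := by
      rw [hcdef, ← Submodule.coe_smul, this]
    rw [this]
    exact smul_mem _ _ (mem_span_singleton_self c)
  -- the square matrix with rows L∘bv and c has unit determinant
  set w : Fin (m+1) → (Fin (m+1) → S) := Fin.snoc (⇑L ∘ bv) c with hw
  have hrangew : Set.range w = Set.range (⇑L ∘ bv) ∪ {c} := by
    ext z
    constructor
    · rintro ⟨j, rfl⟩
      refine Fin.lastCases ?_ (fun i => ?_) j
      · right; rw [hw, Fin.snoc_last]; rfl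
      · left; exact ⟨i, by rw [hw, Fin.snoc_castSucc]⟩
    · rintro (⟨i, rfl⟩ | rfl)
      · exact ⟨i.castSucc, by rw [hw, Fin.snoc_castSucc]⟩
      · exact ⟨Fin.last m, by rw [hw, Fin.snoc_last]⟩
  have hwspan : span S (Set.range w) = ⊤ := by
    rw [hrangew, Submodule.span_union]
    rw [eq_top_iff, ← hsup]
    exact sup_le_sup (le_of_eq hN'span) hC'le
  set A : Matrix (Fin (m+1)) (Fin (m+1)) S := (Matrix.of w)ᵀ with hA
  set T : (Fin (m+1) → S) →ₗ[S] (Fin (m+1) → S) := Matrix.mulVecLin A with hT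
  have hTsurj : Function.Surjective T := by
    rw [← LinearMap.range_eq_top, hT, Matrix.range_mulVecLin, hA, Matrix.col_transpose]
    exact hwspan
  have hTinj : Function.Injective T :=
    OrzechProperty.injective_of_surjective_endomorphism T hTsurj
  set eqv : (Fin (m+1) → S) ≃ₗ[S] (Fin (m+1) → S) :=
    LinearEquiv.ofBijective T ⟨hTinj, hTsurj⟩ with heqv
  have hdet0 : IsUnit (LinearMap.det (eqv : (Fin (m+1) → S) →ₗ[S] (Fin (m+1) → S))) :=
    LinearEquiv.isUnit_det' eqv
  have heqvT : (eqv : (Fin (m+1) → S) →ₗ[S] (Fin (m+1) → S)) = T := rfl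
  rw [heqvT] at hdet0
  have hTdet : LinearMap.det T = psiAux S (⇑L ∘ bv) c := by
    have h1 : T = Matrix.toLin' A := (Matrix.toLin'_apply' A).symm
    rw [h1, LinearMap.det_toLin', hA, Matrix.det_transpose, psiAux_apply]
  rw [hTdet] at hdet0
  -- psi_S kills N'
  have hpsiN' : ∀ y ∈ N', psiAux S (⇑L ∘ bv) y = 0 := by
    intro y hy
    have : N' ≤ LinearMap.ker (psiAux S (⇑L ∘ bv)) := by
      rw [hN'span]
      refine span_le.mpr ?_
      rintro _ ⟨i, rfl⟩
      simp only [SetLike.mem_coe, LinearMap.mem_ker]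
      exact psiAux_self _ i
    exact this hy
  -- psi commutes with localization
  have hcomm : ∀ x, psiAux S (⇑L ∘ bv) (L x) = f (psiAux R bv x) := by
    intro x
    exact psiAux_map f bv x
  constructor
  · -- surjectivity part
    obtain ⟨s, x₀, hsx⟩ := hclear c
    have h1 : f (psiAux R bv x₀) = f s * psiAux S (⇑L ∘ bv) c := by
      rw [← hcomm, ← hsx, LinearMap.map_smul, smul_eq_mul]
    have h2 : IsUnit (f (psiAux R bv x₀)) := by
      rw [h1]
      exact (IsLocalization.map_units S s).mul hdet0
    exact ⟨x₀, (IsLocalization.AtPrime.isUnit_to_map_iff S P (psiAux R bv x₀)).mp h2⟩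
  · -- kernel part
    intro x hx
    have hLx : L x ∈ N' ⊔ C' := by rw [hsup]; trivial
    obtain ⟨u, hu, v, hv, huv⟩ := Submodule.mem_sup.mp hLx
    obtain ⟨a, hav⟩ := mem_span_singleton.mp (hC'le hv)
    have h0 : psiAux S (⇑L ∘ bv) (L x) = 0 := by
      rw [hcomm, hx, map_zero]
    rw [← huv, map_add, hpsiN' u hu, zero_add, ← hav, LinearMap.map_smul, smul_eq_mul] at h0
    have ha0 : a = 0 := by
      rcases hdet0 with ⟨du, hdu⟩
      have := congrArg (· * (↑du⁻¹ : S)) h0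
      simp only [zero_mul, mul_assoc, ← hdu, Units.mul_inv, mul_one] at this
      exact this
    have hLxN' : L x ∈ N' := by
      rw [← huv, ← hav, ha0, zero_smul, add_zero]
      exact hu
    rw [hN'] at hLxN'
    obtain ⟨k, fc, g, hgsum⟩ := Submodule.mem_span_set'.mp hLxN'
    have hgN : ∀ i, ∃ wi ∈ N, L wi = (g i : Fin (m+1) → S) := fun i => by
      obtain ⟨wi, hwi, hwieq⟩ := (g i).2
      exact ⟨wi, hwi, hwieq⟩
    choose wR hwR hLwR using hgN
    obtain ⟨s, hs⟩ := IsLocalization.exist_integer_multiples P.primeCompl Finset.univ fc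
    choose aR haR using fun i => hs i (Finset.mem_univ i)
    have hkey : L ((s : R) • x - ∑ i, aR i • wR i) = 0 := by
      rw [map_sub, map_sum]
      have h3 : L ((s : R) • x) = f s • L x := by
        rw [LinearMap.map_smul, algebraMap_smul]
      have h4 : ∀ i, L (aR i • wR i) = f (aR i) • L (wR i) := fun i => by
        rw [LinearMap.map_smul, algebraMap_smul]
      rw [h3, ← hgsum, Finset.smul_sum]
      simp_rw [h4, hLwR, hf, haR, smul_smul, ← Algebra.smul_def]
      rw [sub_self]
    obtain ⟨t, ht⟩ := hLzero _ hkey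
    refine ⟨(t : R) * (s : R), P.primeCompl.mul_mem t.2 s.2, ?_⟩
    have h5 : ((t : R) * (s : R)) • x = (t : R) • ∑ i, aR i • wR i := by
      have h6 := ht
      rw [smul_sub, sub_eq_zero] at h6
      rw [mul_smul]
      exact h6
    rw [h5]
    exact N.smul_mem _ (Submodule.sum_smul_mem N _ (fun i _ => hwR i))

/-- A free direct summand of rank `n-1` of `R^n` is cofree: the quotient is free. -/
theorem stmt_0 (R : Type*) [CommRing R] (n : ℕ) (N : Submodule R (Fin n → R))
    (hsummand : ∃ C : Submodule R (Fin n → R), IsCompl N C)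
    (hfree : Module.Free R N) (hrank : Module.rank R N = (n - 1 : ℕ)) :
    Module.Free R ((Fin n → R) ⧸ N) := by
  rcases subsingleton_or_nontrivial R with hR | hR
  · haveI : Subsingleton ((Fin n → R) ⧸ N) := Module.subsingleton R _
    exact Module.Free.of_subsingleton R _
  rcases Nat.eq_zero_or_pos n with hn | hn
  · subst hn
    haveI : Subsingleton (Fin 0 → R) := by
      constructor
      intro a b
      funext i
      exact absurd i.2 (Nat.not_lt_zero _)
    haveI : Subsingleton ((Fin 0 → R) ⧸ N) :=
      (Submodule.mkQ_surjective N).subsingleton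
    exact Module.Free.of_subsingleton R _
  obtain ⟨m, rfl⟩ : ∃ m, n = m + 1 := ⟨n - 1, (Nat.succ_pred_eq_of_pos hn).symm⟩
  obtain ⟨C, hc⟩ := hsummand
  -- produce a basis of N indexed by Fin m
  have hrank' : Module.rank R N = (m : Cardinal) := by
    rw [hrank]; norm_num
  haveI := hfree
  have hcardι : (Cardinal.mk (Module.Free.ChooseBasisIndex R N)) = (m : Cardinal) := by
    rw [← Module.Free.rank_eq_card_chooseBasisIndex, hrank']
  obtain ⟨hfin, hcard⟩ := Cardinal.mk_eq_nat_iff_fintype.mp hcardι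
  set bvN : Module.Basis (Fin m) R N :=
    (Module.Free.chooseBasis R N).reindex (@Fintype.equivFinOfCardEq _ hfin _ hcard) with hbvN
  set bv : Fin m → (Fin (m+1) → R) := fun i => ((bvN i : N) : Fin (m+1) → R) with hbv
  have hbveq : bv = ⇑N.subtype ∘ ⇑bvN := rfl
  have hbi : LinearIndependent R bv := by
    rw [hbveq]
    exact bvN.linearIndependent.map' N.subtype N.ker_subtype
  have hbs : Submodule.span R (Set.range bv) = N := by
    rw [hbveq, Set.range_comp, ← Submodule.map_span, bvN.span_eq,
      Submodule.map_subtype_top]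
  set ψ : (Fin (m+1) → R) →ₗ[R] R := psiAux R bv with hψ
  -- N is inside the kernel
  have hker_ge : N ≤ LinearMap.ker ψ := by
    rw [← hbs]
    refine Submodule.span_le.mpr ?_
    rintro _ ⟨i, rfl⟩
    simp only [SetLike.mem_coe, LinearMap.mem_ker]
    exact psiAux_self bv i
  -- ψ is surjective
  have hsurj : Function.Surjective ψ := by
    rw [← LinearMap.range_eq_top]
    by_contra hne
    obtain ⟨P, hPmax, hle⟩ := Ideal.exists_le_maximal (LinearMap.range ψ) hne
    obtain ⟨x₀, hx₀⟩ := (core_local N C hc bv hbi hbs P hPmax).1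
    exact hx₀ (hle ⟨x₀, rfl⟩)
  -- the kernel is exactly N
  have hker_le : LinearMap.ker ψ ≤ N := by
    intro x hx
    rw [LinearMap.mem_ker] at hx
    by_contra hxN
    have hJ : N.colon (Submodule.span R {x}) ≠ ⊤ := by
      intro h
      have h1 : (1 : R) ∈ N.colon (Submodule.span R {x}) := by rw [h]; trivial
      rw [Submodule.mem_colon_span_singleton, one_smul] at h1
      exact hxN h1
    obtain ⟨P, hPmax, hJP⟩ := Ideal.exists_le_maximal _ hJ
    obtain ⟨t, htP, htN⟩ := (core_local N C hc bv hbi hbs P hPmax).2 x hx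
    exact htP (hJP (Submodule.mem_colon_span_singleton.mpr htN))
  have hker : LinearMap.ker ψ = N := le_antisymm hker_le hker_ge
  let e1 : ((Fin (m+1) → R) ⧸ N) ≃ₗ[R] ((Fin (m+1) → R) ⧸ LinearMap.ker ψ) :=
    Submodule.quotEquivOfEq N (LinearMap.ker ψ) hker.symm
  let e2 : ((Fin (m+1) → R) ⧸ LinearMap.ker ψ) ≃ₗ[R] R :=
    ψ.quotKerEquivOfSurjective hsurj
  exact Module.Free.of_equiv (e1.trans e2).symm

end
end

section
/- Let R be a finite commutative ring with Jacobson radical J and R/J ≅ F_1 × ... × F_ℓ a product of fields. Then the number of rank-k free-and-cofree direct summands of R^n equals |J|^{k(n-k)} · ∏_{i=1}^ℓ |Gr_k^n(F_i)|, where Gr_k^n(F) denotes the set of k-dimensional subspaces of F^n. -/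
set_option linter.unusedSectionVars false

open Matrix

section Defs
variable (A : Type*) [CommRing A] (n k : ℕ)

/-- block upper-triangular condition -/
def btP (g : Matrix (Fin n) (Fin n) A) : Prop :=
  ∀ i j : Fin n, k ≤ (i : ℕ) → (j : ℕ) < k → g i j = 0

/-- standard free summand: vectors supported on first k coordinates -/
def V0 : Submodule A (Fin n → A) where
  carrier := {x | ∀ i : Fin n, k ≤ (i : ℕ) → x i = 0}
  add_mem' hx hy i hi := by simp [Set.mem_setOf_eq] at *; simp [hx i hi, hy i hi]
  zero_mem' i _ := rfl
  smul_mem' c x hx i hi := by simp [Set.mem_setOf_eq] at *; simp [hx i hi]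

/-- standard cofree complement: vectors supported on last n-k coordinates -/
def C0 : Submodule A (Fin n → A) where
  carrier := {x | ∀ i : Fin n, (i : ℕ) < k → x i = 0}
  add_mem' hx hy i hi := by simp [Set.mem_setOf_eq] at *; simp [hx i hi, hy i hi]
  zero_mem' i _ := rfl
  smul_mem' c x hx i hi := by simp [Set.mem_setOf_eq] at *; simp [hx i hi]

variable {A n k}

lemma mem_V0 {x : Fin n → A} : x ∈ V0 A n k ↔ ∀ i : Fin n, k ≤ (i : ℕ) → x i = 0 := Iff.rfl
lemma mem_C0 {x : Fin n → A} : x ∈ C0 A n k ↔ ∀ i : Fin n, (i : ℕ) < k → x i = 0 := Iff.rfl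

lemma isCompl_V0_C0 : IsCompl (V0 A n k) (C0 A n k) := by
  constructor
  · rw [disjoint_iff_inf_le]
    rintro x ⟨hx1, hx2⟩
    funext i
    rcases lt_or_ge (i : ℕ) k with h | h
    · exact hx2 i h
    · exact hx1 i h
  · rw [codisjoint_iff_le_sup]
    intro x _
    have : x = (fun i : Fin n => if (i : ℕ) < k then x i else 0) + fun i : Fin n => if (i : ℕ) < k then 0 else x i := by
      funext i; by_cases h : (i : ℕ) < k <;> simp [h]
    rw [this]
    exact Submodule.add_mem_sup (by intro i hi; simp [Nat.not_lt.2 hi]) (by intro i hi; simp [hi])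

end Defs

section Equivs
variable {A : Type*} [CommRing A] {n k : ℕ}

/-- V0 ≃ A^k -/
def V0equiv (hkn : k ≤ n) : (V0 A n k) ≃ₗ[A] (Fin k → A) where
  toFun x := fun j => x.1 (Fin.castLE hkn j)
  map_add' x y := rfl
  map_smul' c x := rfl
  invFun a := ⟨fun i => if h : (i : ℕ) < k then a ⟨i, h⟩ else 0, by
    intro i hi; simp [Nat.not_lt.2 hi]⟩
  left_inv := by
    rintro ⟨x, hx⟩
    ext i
    by_cases h : (i : ℕ) < k
    · simp [h]
    · simp [h, hx i (Nat.not_lt.1 h)]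
  right_inv a := by
    ext j
    simp [j.2]

/-- C0 ≃ A^(n-k) -/
def C0equiv (hkn : k ≤ n) : (C0 A n k) ≃ₗ[A] (Fin (n - k) → A) where
  toFun x := fun j => x.1 ⟨k + j, by omega⟩
  map_add' x y := rfl
  map_smul' c x := rfl
  invFun a := ⟨fun i => if h : k ≤ (i : ℕ) then a ⟨i - k, by omega⟩ else 0, by
    intro i hi; simp [Nat.not_le.2 hi]⟩
  left_inv := by
    rintro ⟨x, hx⟩
    ext i
    by_cases h : k ≤ (i : ℕ)
    · simp only [dif_pos h]
      congr 1
      ext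
      simp
      omega
    · simp [h, hx i (Nat.not_le.1 h)]
  right_inv a := by
    ext j
    have hj : (j : ℕ) < n - k := j.2
    simp only [dif_pos (Nat.le_add_right k j)]
    congr 1
    ext
    simp

/-- V0 is free-and-cofree -/
lemma freeCofree_V0 (hkn : k ≤ n) :
    (∃ C, IsCompl (V0 A n k) C) ∧ Nonempty ((V0 A n k) ≃ₗ[A] (Fin k → A)) ∧
      Nonempty (((Fin n → A) ⧸ (V0 A n k)) ≃ₗ[A] (Fin (n - k) → A)) :=
  ⟨⟨C0 A n k, isCompl_V0_C0⟩, ⟨V0equiv hkn⟩,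
    ⟨(Submodule.quotientEquivOfIsCompl _ _ isCompl_V0_C0).trans (C0equiv hkn)⟩⟩

end Equivs

section BT
variable {A : Type*} [CommRing A] {n k : ℕ}

lemma btP_one : btP A n k (1 : Matrix (Fin n) (Fin n) A) := by
  intro i j hi hj
  have : i ≠ j := by intro h; subst h; omega
  simp [Matrix.one_apply, this]

lemma btP_mul {g h : Matrix (Fin n) (Fin n) A} (hg : btP A n k g) (hh : btP A n k h) :
    btP A n k (g * h) := by
  intro i j hi hj
  rw [Matrix.mul_apply]
  apply Finset.sum_eq_zero
  intro l _
  rcases lt_or_ge (l : ℕ) k with h' | h'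
  · rw [hg i l hi h', zero_mul]
  · rw [hh l j h' hj, mul_zero]

lemma btP_pow {g : Matrix (Fin n) (Fin n) A} (hg : btP A n k g) (t : ℕ) :
    btP A n k (g ^ t) := by
  induction t with
  | zero => simpa using btP_one
  | succ t ih => rw [pow_succ]; exact btP_mul ih hg

lemma btP_inv [Finite A] {u : (Matrix (Fin n) (Fin n) A)ˣ} (hu : btP A n k u.1) :
    btP A n k (↑u⁻¹ : Matrix (Fin n) (Fin n) A) := by
  have : Finite (Matrix (Fin n) (Fin n) A)ˣ := inferInstance
  have hm : 0 < orderOf u := orderOf_pos u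
  have h1 : u ^ (orderOf u - 1) * u = 1 := by
    rw [← pow_succ, Nat.sub_add_cancel hm, pow_orderOf_eq_one]
  have h2 : u⁻¹ = u ^ (orderOf u - 1) := inv_eq_of_mul_eq_one_left h1
  rw [h2, Units.val_pow_eq_pow_val]
  exact btP_pow hu _

lemma map_V0_le_of_btP {g : Matrix (Fin n) (Fin n) A} (hg : btP A n k g) :
    (V0 A n k).map g.mulVecLin ≤ V0 A n k := by
  rintro _ ⟨x, hx, rfl⟩ i hi
  rw [Matrix.mulVecLin_apply, Matrix.mulVec, dotProduct]
  apply Finset.sum_eq_zero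
  intro l _
  rcases lt_or_ge (l : ℕ) k with h' | h'
  · rw [hg i l hi h', zero_mul]
  · rw [hx l h', mul_zero]

lemma btP_of_map_V0_le {g : Matrix (Fin n) (Fin n) A}
    (h : (V0 A n k).map g.mulVecLin ≤ V0 A n k) : btP A n k g := by
  intro i j hi hj
  have hsj : (Pi.single j (1 : A) : Fin n → A) ∈ V0 A n k := by
    intro i' hi'
    have : i' ≠ j := by intro hh; subst hh; omega
    simp [Pi.single_eq_of_ne this]
  have := h ⟨Pi.single j 1, hsj, rfl⟩ i hi
  simpa using this

/-- stabilizer characterization -/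
lemma map_V0_eq_iff_btP [Finite A] (u : (Matrix (Fin n) (Fin n) A)ˣ) :
    (V0 A n k).map (Matrix.mulVecLin u.1) = V0 A n k ↔ btP A n k u.1 := by
  constructor
  · intro h; exact btP_of_map_V0_le h.le
  · intro h
    refine le_antisymm (map_V0_le_of_btP h) ?_
    have h2 := map_V0_le_of_btP (btP_inv h)
    have : V0 A n k = ((V0 A n k).map (Matrix.mulVecLin ↑u⁻¹)).map (Matrix.mulVecLin u.1) := by
      rw [← Submodule.map_comp, ← Matrix.mulVecLin_mul, Units.mul_inv, Matrix.mulVecLin_one,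
        Submodule.map_id]
    exact this.trans_le (Submodule.map_mono h2)

end BT

section Transitive
variable {A : Type*} [CommRing A] {n k : ℕ}

/-- the free-cofree predicate -/
def FC (A : Type*) [CommRing A] (n k : ℕ) (V : Submodule A (Fin n → A)) : Prop :=
  (∃ C : Submodule A (Fin n → A), IsCompl V C) ∧
    Nonempty (V ≃ₗ[A] (Fin k → A)) ∧
    Nonempty (((Fin n → A) ⧸ V) ≃ₗ[A] (Fin (n - k) → A))

/-- linear auto from a unit matrix -/
def equivOfUnit (u : (Matrix (Fin n) (Fin n) A)ˣ) : (Fin n → A) ≃ₗ[A] (Fin n → A) :=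
  LinearEquiv.ofLinear (Matrix.mulVecLin u.1) (Matrix.mulVecLin ↑u⁻¹)
    (by rw [← Matrix.mulVecLin_mul, Units.mul_inv, Matrix.mulVecLin_one])
    (by rw [← Matrix.mulVecLin_mul, Units.inv_mul, Matrix.mulVecLin_one])

lemma equivOfUnit_coe (u : (Matrix (Fin n) (Fin n) A)ˣ) :
    (equivOfUnit u : (Fin n → A) →ₗ[A] (Fin n → A)) = Matrix.mulVecLin u.1 := rfl

/-- unit matrix from a linear auto -/
def unitOfEquiv (E : (Fin n → A) ≃ₗ[A] (Fin n → A)) : (Matrix (Fin n) (Fin n) A)ˣ where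
  val := LinearMap.toMatrix' (E : (Fin n → A) →ₗ[A] (Fin n → A))
  inv := LinearMap.toMatrix' (E.symm : (Fin n → A) →ₗ[A] (Fin n → A))
  val_inv := by
    rw [← LinearMap.toMatrix'_comp]
    have : (E : (Fin n → A) →ₗ[A] (Fin n → A)).comp
        (E.symm : (Fin n → A) →ₗ[A] (Fin n → A)) = LinearMap.id := by
      ext x; simp
    rw [this, LinearMap.toMatrix'_id]
  inv_val := by
    rw [← LinearMap.toMatrix'_comp]
    have : (E.symm : (Fin n → A) →ₗ[A] (Fin n → A)).comp
        (E : (Fin n → A) →ₗ[A] (Fin n → A)) = LinearMap.id := by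
      ext x; simp
    rw [this, LinearMap.toMatrix'_id]

lemma mulVecLin_unitOfEquiv (E : (Fin n → A) ≃ₗ[A] (Fin n → A)) :
    Matrix.mulVecLin (unitOfEquiv E).1 = (E : (Fin n → A) →ₗ[A] (Fin n → A)) := by
  apply LinearMap.ext
  intro x
  conv_rhs => rw [← Matrix.toLin'_toMatrix' (E : (Fin n → A) →ₗ[A] (Fin n → A))]
  rw [Matrix.mulVecLin_apply, Matrix.toLin'_apply]
  rfl

/-- invariance of FC under linear autos -/
lemma fc_map (e : (Fin n → A) ≃ₗ[A] (Fin n → A)) {V : Submodule A (Fin n → A)}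
    (h : FC A n k V) :
    FC A n k (V.map (e : (Fin n → A) →ₗ[A] (Fin n → A))) := by
  obtain ⟨⟨C, hC⟩, ⟨iV⟩, ⟨iQ⟩⟩ := h
  refine ⟨⟨C.map (e : (Fin n → A) →ₗ[A] (Fin n → A)), ?_, ?_⟩,
    ⟨(e.submoduleMap V).symm.trans iV⟩,
    ⟨((Submodule.Quotient.equiv V _ e rfl).symm).trans iQ⟩⟩
  · rw [disjoint_iff, ← Submodule.map_inf (e : (Fin n → A) →ₗ[A] (Fin n → A)) e.injective,
      disjoint_iff.1 hC.1, Submodule.map_bot]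
  · rw [codisjoint_iff, ← Submodule.map_sup, codisjoint_iff.1 hC.2, Submodule.map_top]
    exact LinearEquiv.range e

/-- transitivity -/
lemma exists_unit_map_V0 (hkn : k ≤ n) {V : Submodule A (Fin n → A)} (hV : FC A n k V) :
    ∃ u : (Matrix (Fin n) (Fin n) A)ˣ, (V0 A n k).map (Matrix.mulVecLin u.1) = V := by
  obtain ⟨⟨C, hC⟩, ⟨iV⟩, ⟨iQ⟩⟩ := hV
  set iC : C ≃ₗ[A] (Fin (n - k) → A) :=
    (Submodule.quotientEquivOfIsCompl V C hC).symm.trans iQ with hiC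
  set E : (Fin n → A) ≃ₗ[A] (Fin n → A) :=
    (Submodule.prodEquivOfIsCompl _ _ (isCompl_V0_C0 (A := A) (n := n) (k := k))).symm.trans
      (((V0equiv hkn).prodCongr (C0equiv hkn)).trans
        ((iV.symm.prodCongr iC.symm).trans (Submodule.prodEquivOfIsCompl V C hC))) with hE
  refine ⟨unitOfEquiv E, ?_⟩
  rw [mulVecLin_unitOfEquiv]
  apply le_antisymm
  · rintro _ ⟨x, hx, rfl⟩
    have h1 : (Submodule.prodEquivOfIsCompl _ _
        (isCompl_V0_C0 (A := A) (n := n) (k := k))).symm x = (⟨x, hx⟩, 0) :=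
      Submodule.prodEquivOfIsCompl_symm_apply_left _ _ _ ⟨x, hx⟩
    show E x ∈ V
    have h2 : E x = (Submodule.prodEquivOfIsCompl V C hC)
        ((iV.symm.prodCongr iC.symm) (((V0equiv hkn).prodCongr (C0equiv hkn)) (⟨x, hx⟩, 0))) := by
      rw [hE]; simp only [LinearEquiv.trans_apply, h1]
    rw [h2]
    have h3 : ((V0equiv hkn).prodCongr (C0equiv hkn)) ((⟨x, hx⟩ : V0 A n k), (0 : C0 A n k))
        = (V0equiv hkn ⟨x, hx⟩, 0) := by
      rw [LinearEquiv.prodCongr_apply, (C0equiv hkn).map_zero]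
    rw [h3]
    have h4 : (iV.symm.prodCongr iC.symm) (V0equiv hkn ⟨x, hx⟩, (0 : Fin (n - k) → A))
        = (iV.symm (V0equiv hkn ⟨x, hx⟩), 0) := by
      rw [LinearEquiv.prodCongr_apply, iC.symm.map_zero]
    rw [h4, Submodule.coe_prodEquivOfIsCompl']
    simp only [ZeroMemClass.coe_zero, add_zero]
    exact Submodule.coe_mem _
  · intro v hv
    refine ⟨E.symm v, ?_, E.apply_symm_apply v⟩
    have h1 : (Submodule.prodEquivOfIsCompl V C hC).symm v = (⟨v, hv⟩, 0) :=
      Submodule.prodEquivOfIsCompl_symm_apply_left _ _ _ ⟨v, hv⟩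
    have h2 : E.symm v = (Submodule.prodEquivOfIsCompl _ _
        (isCompl_V0_C0 (A := A) (n := n) (k := k)))
        (((V0equiv hkn).prodCongr (C0equiv hkn)).symm ((iV.symm.prodCongr iC.symm).symm (⟨v, hv⟩, 0))) := by
      rw [hE]; simp only [LinearEquiv.symm_trans_apply, h1, LinearEquiv.symm_symm]
    rw [h2]
    have h3 : (iV.symm.prodCongr iC.symm).symm ((⟨v, hv⟩ : V), (0 : C))
        = (iV ⟨v, hv⟩, 0) := by
      rw [LinearEquiv.prodCongr_symm, LinearEquiv.prodCongr_apply]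
      simp only [LinearEquiv.symm_symm]
      rw [iC.map_zero]
    rw [h3]
    have h4 : ((V0equiv hkn).prodCongr (C0equiv hkn)).symm (iV ⟨v, hv⟩, (0 : Fin (n - k) → A))
        = ((V0equiv hkn).symm (iV ⟨v, hv⟩), 0) := by
      rw [LinearEquiv.prodCongr_symm, LinearEquiv.prodCongr_apply, (C0equiv hkn).symm.map_zero]
    rw [h4, Submodule.coe_prodEquivOfIsCompl']
    simp only [ZeroMemClass.coe_zero, add_zero]
    exact Submodule.coe_mem _

end Transitive

section Count
open Function

lemma card_of_fibers {α β : Type*} [Finite α] {f : α → β} (hs : Surjective f) {c : ℕ}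
    (h : ∀ b, Nat.card {a // f a = b} = c) : Nat.card α = Nat.card β * c := by
  have : Finite β := Finite.of_surjective f hs
  cases nonempty_fintype α
  cases nonempty_fintype β
  classical
  rw [Nat.card_eq_fintype_card, Nat.card_eq_fintype_card,
    Fintype.card_congr (Equiv.sigmaFiberEquiv f).symm, Fintype.card_sigma]
  have : ∀ b : β, Fintype.card {a // f a = b} = c := by
    intro b; rw [← Nat.card_eq_fintype_card]; exact h b
  rw [Finset.sum_congr rfl fun b _ => this b, Finset.sum_const, Finset.card_univ, smul_eq_mul,
    mul_comm]

variable {A : Type*} [CommRing A] [Finite A] {n k : ℕ}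

instance : Finite (Submodule A (Fin n → A)) :=
  Finite.of_injective (SetLike.coe : Submodule A (Fin n → A) → Set (Fin n → A))
    SetLike.coe_injective

/-- orbit-stabilizer counting -/
lemma card_GL_eq_card_FC_mul_card_btP (hkn : k ≤ n) :
    Nat.card ((Matrix (Fin n) (Fin n) A)ˣ) =
      Nat.card {V : Submodule A (Fin n → A) // FC A n k V} *
        Nat.card {u : (Matrix (Fin n) (Fin n) A)ˣ // btP A n k u.1} := by
  set f : (Matrix (Fin n) (Fin n) A)ˣ → {V : Submodule A (Fin n → A) // FC A n k V} :=
    fun u => ⟨(V0 A n k).map (Matrix.mulVecLin u.1), by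
      have := fc_map (equivOfUnit u) (freeCofree_V0 hkn)
      rwa [equivOfUnit_coe] at this⟩ with hf
  have hs : Surjective f := by
    rintro ⟨V, hV⟩
    obtain ⟨u, hu⟩ := exists_unit_map_V0 hkn hV
    exact ⟨u, Subtype.ext hu⟩
  refine card_of_fibers hs ?_
  rintro ⟨V, hV⟩
  obtain ⟨u₀, hu₀⟩ := exists_unit_map_V0 hkn hV
  have key : ∀ u : (Matrix (Fin n) (Fin n) A)ˣ,
      (V0 A n k).map (Matrix.mulVecLin u.1) = V ↔ btP A n k ((u₀⁻¹ * u).1) := by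
    intro u
    rw [← map_V0_eq_iff_btP]
    constructor
    · intro h
      rw [Units.val_mul, Matrix.mulVecLin_mul, Submodule.map_comp, h, ← hu₀,
        ← Submodule.map_comp, ← Matrix.mulVecLin_mul, ← Units.val_mul, inv_mul_cancel,
        Units.val_one, Matrix.mulVecLin_one, Submodule.map_id]
    · intro h
      have : (V0 A n k).map (Matrix.mulVecLin ((u₀ * (u₀⁻¹ * u)).1)) = V := by
        rw [Units.val_mul, Matrix.mulVecLin_mul, Submodule.map_comp, h, hu₀]
      rwa [mul_inv_cancel_left] at this
  refine Nat.card_congr ?_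
  refine Equiv.ofBijective (fun x => ⟨u₀⁻¹ * x.1, (key x.1).1 (congrArg Subtype.val x.2)⟩) ?_
  constructor
  · rintro ⟨x, hx⟩ ⟨y, hy⟩ hxy
    simp only [Subtype.mk.injEq] at hxy ⊢
    exact mul_left_cancel hxy
  · rintro ⟨p, hp⟩
    refine ⟨⟨u₀ * p, ?_⟩, ?_⟩
    · apply Subtype.ext
      show (V0 A n k).map (Matrix.mulVecLin ((u₀ * p).1)) = V
      rw [key, inv_mul_cancel_left]
      exact hp
    · simp only [Subtype.mk.injEq]
      rw [inv_mul_cancel_left]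

end Count

section Reduction
open Function
variable {A B : Type*} [CommRing A] [CommRing B] [Finite A] {n k : ℕ}
variable (φ : A →+* B)

lemma isUnit_matrix_of_map (hu : ∀ x : A, IsUnit (φ x) → IsUnit x)
    (M : Matrix (Fin n) (Fin n) A) (h : IsUnit (φ.mapMatrix M)) : IsUnit M := by
  rw [Matrix.isUnit_iff_isUnit_det] at h ⊢
  rw [← RingHom.map_det] at h
  exact hu _ h

lemma mapMatrix_surjective (hφ : Surjective φ) :
    Surjective (φ.mapMatrix : Matrix (Fin n) (Fin n) A → Matrix (Fin n) (Fin n) B) := by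
  intro N
  refine ⟨Matrix.of fun i j => surjInv hφ (N i j), ?_⟩
  ext i j
  exact surjInv_eq hφ _

/-- reduction of units -/
def piGL : (Matrix (Fin n) (Fin n) A)ˣ →* (Matrix (Fin n) (Fin n) B)ˣ :=
  Units.map (φ.mapMatrix : Matrix (Fin n) (Fin n) A →+* Matrix (Fin n) (Fin n) B).toMonoidHom

lemma piGL_val (u : (Matrix (Fin n) (Fin n) A)ˣ) : (piGL φ u).1 = φ.mapMatrix u.1 := rfl

lemma piGL_surjective (hφ : Surjective φ) (hu : ∀ x : A, IsUnit (φ x) → IsUnit x) :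
    Surjective (piGL φ : (Matrix (Fin n) (Fin n) A)ˣ → (Matrix (Fin n) (Fin n) B)ˣ) := by
  intro v
  obtain ⟨M, hM⟩ := mapMatrix_surjective φ hφ v.1
  have hMu : IsUnit M := isUnit_matrix_of_map φ hu M (hM ▸ v.isUnit)
  exact ⟨hMu.unit, Units.ext (by rw [piGL_val, hMu.unit_spec, hM])⟩

lemma card_fiber_piGL (hφ : Surjective φ) (hu : ∀ x : A, IsUnit (φ x) → IsUnit x)
    (v : (Matrix (Fin n) (Fin n) B)ˣ) :
    Nat.card {u : (Matrix (Fin n) (Fin n) A)ˣ // piGL φ u = v} =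
      Nat.card (RingHom.ker φ) ^ (n * n) := by
  obtain ⟨u₀, hu₀⟩ := piGL_surjective φ hφ hu v
  have hval : ∀ u : (Matrix (Fin n) (Fin n) A)ˣ, piGL φ u = v ↔
      ∀ i j, φ (u.1 i j) = v.1 i j := by
    intro u
    constructor
    · intro h i j
      have := congrArg Units.val h
      rw [piGL_val] at this
      exact congrFun (congrFun this i) j
    · intro h
      apply Units.ext
      rw [piGL_val]
      ext i j
      exact h i j
  have e : {u : (Matrix (Fin n) (Fin n) A)ˣ // piGL φ u = v} ≃
      (Fin n → Fin n → RingHom.ker φ) := by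
    refine ⟨fun x i j => ⟨x.1.1 i j - u₀.1 i j, ?_⟩, fun f => ?_, ?_, ?_⟩
    · have h1 := (hval x.1).1 x.2 i j
      have h2 := (hval u₀).1 hu₀ i j
      simp only [RingHom.mem_ker, map_sub, h1, h2, sub_self]
    · have hN : IsUnit (u₀.1 + Matrix.of fun i j => ((f i j : A))) := by
        apply isUnit_matrix_of_map φ hu
        have : φ.mapMatrix (u₀.1 + Matrix.of fun i j => ((f i j : A))) = v.1 := by
          ext i j
          simp only [RingHom.mapMatrix_apply, Matrix.map_apply, Matrix.add_apply, map_add,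
            Matrix.of_apply]
          rw [RingHom.mem_ker.1 (f i j).2, add_zero]
          exact (hval u₀).1 hu₀ i j
        rw [this]
        exact v.isUnit
      refine ⟨hN.unit, (hval _).2 fun i j => ?_⟩
      rw [hN.unit_spec]
      simp only [Matrix.add_apply, map_add, Matrix.of_apply]
      rw [RingHom.mem_ker.1 (f i j).2, add_zero]
      exact (hval u₀).1 hu₀ i j
    · rintro ⟨u, hu'⟩
      apply Subtype.ext
      apply Units.ext
      rw [IsUnit.unit_spec]
      ext i j
      simp
    · intro f
      funext i j
      apply Subtype.ext
      simp
  rw [Nat.card_congr e, Nat.card_fun, Nat.card_fun, Nat.card_eq_fintype_card (α := Fin n),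
    Fintype.card_fin, ← pow_mul]

lemma card_units_eq (hφ : Surjective φ) (hu : ∀ x : A, IsUnit (φ x) → IsUnit x) :
    Nat.card (Matrix (Fin n) (Fin n) A)ˣ =
      Nat.card (Matrix (Fin n) (Fin n) B)ˣ * Nat.card (RingHom.ker φ) ^ (n * n) :=
  card_of_fibers (piGL_surjective φ hφ hu) (card_fiber_piGL φ hφ hu)

end Reduction

section ParReduction
open Function
variable {A B : Type*} [CommRing A] [CommRing B] [Finite A] {n k : ℕ}
variable (φ : A →+* B)

/-- cardinality of the index set of "allowed" positions -/
lemma card_not_bt (hkn : k ≤ n) :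
    Nat.card {ij : Fin n × Fin n // ¬(k ≤ (ij.1 : ℕ) ∧ (ij.2 : ℕ) < k)} = n * n - k * (n - k) := by
  classical
  rw [Nat.card_eq_fintype_card, Fintype.card_subtype_compl]
  have h1 : Fintype.card {ij : Fin n × Fin n // k ≤ (ij.1 : ℕ) ∧ (ij.2 : ℕ) < k}
      = (n - k) * k := by
    rw [Fintype.card_congr (Equiv.subtypeProdEquivProd
      (p := fun i : Fin n => k ≤ (i : ℕ)) (q := fun j : Fin n => (j : ℕ) < k)),
      Fintype.card_prod]
    have e1 : {i : Fin n // k ≤ (i : ℕ)} ≃ Fin (n - k) :=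
      ⟨fun i => ⟨(i : ℕ) - k, by omega⟩, fun j => ⟨⟨k + j, by omega⟩, by simp⟩,
        fun i => by ext; simp; omega, fun j => by ext; simp⟩
    have e2 : {j : Fin n // (j : ℕ) < k} ≃ Fin k :=
      ⟨fun j => ⟨(j : ℕ), j.2⟩, fun j => ⟨⟨(j : ℕ), by omega⟩, j.2⟩,
        fun j => by ext; simp, fun j => by ext; simp⟩
    rw [Fintype.card_congr e1, Fintype.card_congr e2, Fintype.card_fin, Fintype.card_fin]
  rw [h1, Fintype.card_prod, Fintype.card_fin]
  ring_nf

/-- reduction on parabolic subtypes -/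
def piP (q : {u : (Matrix (Fin n) (Fin n) A)ˣ // btP A n k u.1}) :
    {v : (Matrix (Fin n) (Fin n) B)ˣ // btP B n k v.1} :=
  ⟨piGL φ q.1, fun i j hi hj => by
    rw [piGL_val]
    show φ (q.1.1 i j) = 0
    rw [q.2 i j hi hj, map_zero]⟩

lemma piP_surjective (hφ : Surjective φ) (hu : ∀ x : A, IsUnit (φ x) → IsUnit x) :
    Surjective (piP (n := n) (k := k) φ) := by
  classical
  rintro ⟨v, hv⟩
  set M : Matrix (Fin n) (Fin n) A :=
    Matrix.of fun i j => if k ≤ (i : ℕ) ∧ (j : ℕ) < k then 0 else surjInv hφ (v.1 i j) with hM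
  have hMv : φ.mapMatrix M = v.1 := by
    ext i j
    show φ (M i j) = v.1 i j
    rw [hM]
    by_cases h : k ≤ (i : ℕ) ∧ (j : ℕ) < k
    · simp only [Matrix.of_apply, if_pos h, map_zero]
      exact (hv i j h.1 h.2).symm
    · simp only [Matrix.of_apply, if_neg h]
      exact surjInv_eq hφ _
  have hMu : IsUnit M := isUnit_matrix_of_map φ hu M (hMv ▸ v.isUnit)
  refine ⟨⟨hMu.unit, ?_⟩, ?_⟩
  · intro i j hi hj
    rw [hMu.unit_spec, hM]
    simp [hi, hj]
  · apply Subtype.ext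
    apply Units.ext
    show φ.mapMatrix (hMu.unit).1 = v.1
    rw [hMu.unit_spec, hMv]

lemma card_fiber_piP (hkn : k ≤ n) (hφ : Surjective φ) (hu : ∀ x : A, IsUnit (φ x) → IsUnit x)
    (p : {v : (Matrix (Fin n) (Fin n) B)ˣ // btP B n k v.1}) :
    Nat.card {q : {u : (Matrix (Fin n) (Fin n) A)ˣ // btP A n k u.1} // piP φ q = p} =
      Nat.card (RingHom.ker φ) ^ (n * n - k * (n - k)) := by
  classical
  obtain ⟨q₀, hq₀⟩ := piP_surjective φ hφ hu p
  have hval : ∀ q : {u : (Matrix (Fin n) (Fin n) A)ˣ // btP A n k u.1}, piP φ q = p ↔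
      ∀ i j, φ (q.1.1 i j) = p.1.1 i j := by
    intro q
    constructor
    · intro h i j
      have := congrArg (fun z => z.1.1 i j) h
      exact this
    · intro h
      apply Subtype.ext; apply Units.ext; ext i j
      exact h i j
  set Fm : {q : {u : (Matrix (Fin n) (Fin n) A)ˣ // btP A n k u.1} // piP φ q = p} →
      ({ij : Fin n × Fin n // ¬(k ≤ (ij.1 : ℕ) ∧ (ij.2 : ℕ) < k)} → RingHom.ker φ) :=
    fun x s => ⟨x.1.1.1 s.1.1 s.1.2 - q₀.1.1 s.1.1 s.1.2, by
      have h1 := (hval x.1).1 x.2 s.1.1 s.1.2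
      have h2 := (hval q₀).1 hq₀ s.1.1 s.1.2
      simp only [RingHom.mem_ker, map_sub, h1, h2, sub_self]⟩ with hFm
  have hbij : Function.Bijective Fm := by
    constructor
    · rintro ⟨⟨u, hbt⟩, hq⟩ ⟨⟨u', hbt'⟩, hq'⟩ hxy
      apply Subtype.ext; apply Subtype.ext; apply Units.ext
      ext i j
      by_cases h : k ≤ (i : ℕ) ∧ (j : ℕ) < k
      · rw [hbt i j h.1 h.2, hbt' i j h.1 h.2]
      · have := congrArg Subtype.val (congrFun hxy ⟨(i, j), h⟩)
        simp only [hFm] at this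
        have h2 : u.1 i j - q₀.1.1 i j = u'.1 i j - q₀.1.1 i j := this
        exact sub_left_injective h2
    · intro g
      set N : Matrix (Fin n) (Fin n) A := q₀.1.1 + Matrix.of fun (i j : Fin n) =>
        if h : k ≤ (i : ℕ) ∧ (j : ℕ) < k then 0 else (g ⟨(i, j), h⟩ : A) with hNdef
      have hNmap : φ.mapMatrix N = p.1.1 := by
        ext i j
        show φ (N i j) = p.1.1 i j
        rw [hNdef]
        simp only [Matrix.add_apply, Matrix.of_apply, map_add]
        by_cases h : k ≤ (i : ℕ) ∧ (j : ℕ) < k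
        · rw [dif_pos h, map_zero, add_zero]
          exact (hval q₀).1 hq₀ i j
        · rw [dif_neg h, RingHom.mem_ker.1 (g ⟨(i, j), h⟩).2, add_zero]
          exact (hval q₀).1 hq₀ i j
      have hNu : IsUnit N := isUnit_matrix_of_map φ hu N (hNmap ▸ p.1.isUnit)
      have hNval : (hNu.unit : Matrix (Fin n) (Fin n) A) = N := hNu.unit_spec
      have hNbt : btP A n k (hNu.unit : Matrix (Fin n) (Fin n) A) := by
        rw [hNval, hNdef]
        intro i j hi hj
        simp only [Matrix.add_apply, Matrix.of_apply, dif_pos (And.intro hi hj), add_zero]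
        exact q₀.2 i j hi hj
      have hNfib : piP φ (⟨hNu.unit, hNbt⟩ : {u : (Matrix (Fin n) (Fin n) A)ˣ // btP A n k u.1})
          = p := by
        rw [hval]
        intro i j
        show φ ((hNu.unit : Matrix (Fin n) (Fin n) A) i j) = p.1.1 i j
        rw [hNval, ← hNmap]
        rfl
      refine ⟨⟨⟨hNu.unit, hNbt⟩, hNfib⟩, ?_⟩
      funext s
      apply Subtype.ext
      show (hNu.unit : Matrix (Fin n) (Fin n) A) s.1.1 s.1.2 - q₀.1.1 s.1.1 s.1.2 = (g s : A)
      rw [hNval, hNdef]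
      simp only [Matrix.add_apply, Matrix.of_apply, dif_neg s.2]
      ring
  have e := Equiv.ofBijective Fm hbij
  rw [Nat.card_congr e, Nat.card_fun, card_not_bt hkn]

lemma card_par_eq (hkn : k ≤ n) (hφ : Surjective φ) (hu : ∀ x : A, IsUnit (φ x) → IsUnit x) :
    Nat.card {u : (Matrix (Fin n) (Fin n) A)ˣ // btP A n k u.1} =
      Nat.card {v : (Matrix (Fin n) (Fin n) B)ˣ // btP B n k v.1} *
        Nat.card (RingHom.ker φ) ^ (n * n - k * (n - k)) :=
  card_of_fibers (piP_surjective φ hφ hu) (card_fiber_piP φ hkn hφ hu)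

end ParReduction

section PiDecomp
variable {ι : Type*} [Fintype ι] {B : ι → Type*} [∀ i, CommRing (B i)] {n k : ℕ}

/-- matrices over a product ring -/
def matPi : Matrix (Fin n) (Fin n) (∀ i, B i) ≃+* ∀ i, Matrix (Fin n) (Fin n) (B i) where
  toFun M := fun i => Matrix.of fun a b => M a b i
  invFun f := Matrix.of fun a b => fun i => f i a b
  left_inv M := rfl
  right_inv f := rfl
  map_add' M N := rfl
  map_mul' M N := by
    funext i
    ext a b
    show (M * N) a b i = ((Matrix.of fun a b => M a b i) * (Matrix.of fun a b => N a b i)) a b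
    rw [Matrix.mul_apply, Matrix.mul_apply]
    simp only [Matrix.of_apply]
    rw [Finset.sum_apply]
    rfl

/-- units of a product monoid -/
def unitsPi {M : ι → Type*} [∀ i, Monoid (M i)] : (∀ i, M i)ˣ ≃* ∀ i, (M i)ˣ where
  toFun u := fun i => ⟨u.1 i, (↑u⁻¹ : ∀ i, M i) i, congrFun u.val_inv i, congrFun u.inv_val i⟩
  invFun f := ⟨fun i => (f i).1, fun i => (f i).2,
    funext fun i => (f i).val_inv, funext fun i => (f i).inv_val⟩
  left_inv u := Units.ext rfl
  right_inv f := funext fun i => Units.ext rfl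
  map_mul' u v := funext fun i => Units.ext rfl

end PiDecomp

section PiCount
variable {ι : Type*} [Fintype ι] {B : ι → Type*} [∀ i, CommRing (B i)] {n k : ℕ}

/-- composite equivalence on units -/
def unitsMatPi : (Matrix (Fin n) (Fin n) (∀ i, B i))ˣ ≃* ∀ i, (Matrix (Fin n) (Fin n) (B i))ˣ :=
  (Units.mapEquiv (matPi.toMulEquiv)).trans unitsPi

lemma unitsMatPi_val (u : (Matrix (Fin n) (Fin n) (∀ i, B i))ˣ) (i : ι) (a b : Fin n) :
    ((unitsMatPi u i : (Matrix (Fin n) (Fin n) (B i))ˣ) : Matrix (Fin n) (Fin n) (B i)) a b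
      = u.1 a b i := rfl

lemma card_GL_pi :
    Nat.card (Matrix (Fin n) (Fin n) (∀ i, B i))ˣ =
      ∏ i, Nat.card (Matrix (Fin n) (Fin n) (B i))ˣ := by
  rw [Nat.card_congr (unitsMatPi.toEquiv), Nat.card_pi]

lemma card_P_pi :
    Nat.card {u : (Matrix (Fin n) (Fin n) (∀ i, B i))ˣ // btP (∀ i, B i) n k u.1} =
      ∏ i, Nat.card {u : (Matrix (Fin n) (Fin n) (B i))ˣ // btP (B i) n k u.1} := by
  have key : ∀ u : (Matrix (Fin n) (Fin n) (∀ i, B i))ˣ,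
      btP (∀ i, B i) n k u.1 ↔ ∀ i, btP (B i) n k (unitsMatPi u i).1 := by
    intro u
    constructor
    · intro h i a b ha hb
      rw [unitsMatPi_val, h a b ha hb]
      rfl
    · intro h a b ha hb
      funext i
      exact h i a b ha hb
  have e1 : {u : (Matrix (Fin n) (Fin n) (∀ i, B i))ˣ // btP (∀ i, B i) n k u.1} ≃
      {f : ∀ i, (Matrix (Fin n) (Fin n) (B i))ˣ // ∀ i, btP (B i) n k (f i).1} :=
    (Equiv.subtypeEquiv unitsMatPi.toEquiv key)
  rw [Nat.card_congr (e1.trans (Equiv.subtypePiEquivPi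
    (p := fun i (x : (Matrix (Fin n) (Fin n) (B i))ˣ) => btP (B i) n k x.1))), Nat.card_pi]

end PiCount

section FieldCase
variable {K : Type*} [Field K] {n k : ℕ}

lemma fc_iff_finrank (V : Submodule K (Fin n → K)) :
    FC K n k V ↔ Module.finrank K V = k := by
  constructor
  · rintro ⟨-, ⟨iV⟩, -⟩
    rw [iV.finrank_eq, Module.finrank_fin_fun]
  · intro h
    have hfd : Module.Finite K (Fin n → K) := inferInstance
    have h2 : Module.finrank K ((Fin n → K) ⧸ V) + Module.finrank K V
        = Module.finrank K (Fin n → K) := V.finrank_quotient_add_finrank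
    rw [Module.finrank_fin_fun, h] at h2
    refine ⟨V.exists_isCompl, ?_, ?_⟩
    · exact FiniteDimensional.nonempty_linearEquiv_of_finrank_eq
        (by rw [h, Module.finrank_fin_fun])
    · exact FiniteDimensional.nonempty_linearEquiv_of_finrank_eq
        (by rw [Module.finrank_fin_fun]; omega)

lemma card_fc_eq_card_finrank :
    Nat.card {V : Submodule K (Fin n → K) // FC K n k V} =
      Nat.card {W : Submodule K (Fin n → K) // Module.finrank K W = k} :=
  Nat.card_congr (Equiv.subtypeEquivRight fc_iff_finrank)

end FieldCase

/-- For a finite commutative ring `R` with Jacobson radical `J` and `R/J ≅ F₁ × ⋯ × F_ℓ`,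
the number of rank-`k` free-and-cofree direct summands of `Rⁿ` is
`|J|^(k(n-k)) · ∏ᵢ |Gr_k^n(Fᵢ)|`. -/
theorem stmt_7 (R : Type*) [CommRing R] [Fintype R] (n k ℓ : ℕ) (hkn : k ≤ n)
    (F : Fin ℓ → Type*) [∀ i, Field (F i)] [∀ i, Fintype (F i)]
    (e : (R ⧸ (Ideal.jacobson (⊥ : Ideal R))) ≃+* (∀ i, F i)) :
    Nat.card {V : Submodule R (Fin n → R) //
        (∃ C : Submodule R (Fin n → R), IsCompl V C) ∧
        Nonempty (V ≃ₗ[R] (Fin k → R)) ∧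
        Nonempty (((Fin n → R) ⧸ V) ≃ₗ[R] (Fin (n - k) → R))}
      = Nat.card (Ideal.jacobson (⊥ : Ideal R)) ^ (k * (n - k))
        * ∏ i, Nat.card {W : Submodule (F i) (Fin n → F i) // Module.finrank (F i) W = k} := by
  classical
  set J := Ideal.jacobson (⊥ : Ideal R) with hJ
  set φ : R →+* (∀ i, F i) := e.toRingHom.comp (Ideal.Quotient.mk J) with hφdef
  have hφ : Function.Surjective φ := e.surjective.comp Ideal.Quotient.mk_surjective
  have hu : ∀ x : R, IsUnit (φ x) → IsUnit x := by
    intro x hx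
    have h1 : IsUnit (Ideal.Quotient.mk J x) := by
      have h2 := hx.map e.symm.toRingHom
      have h3 : e.symm.toRingHom (φ x) = Ideal.Quotient.mk J x := by
        simp [hφdef]
      rwa [h3] at h2
    obtain ⟨w, hw⟩ := h1
    obtain ⟨y, hy⟩ := Ideal.Quotient.mk_surjective (I := J) (↑w⁻¹)
    have hxy : Ideal.Quotient.mk J (x * y) = 1 := by
      rw [_root_.map_mul, ← hw, hy, Units.mul_inv]
    have hmem : x * y - 1 ∈ J := by
      apply Ideal.Quotient.eq_zero_iff_mem.1
      rw [_root_.map_sub, hxy, _root_.map_one, sub_self]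
    exact isUnit_of_mul_isUnit_left (Ideal.isUnit_of_sub_one_mem_jacobson_bot (x * y) hmem)
  have hker : RingHom.ker φ = J := by
    ext x
    rw [RingHom.mem_ker]
    have : φ x = e (Ideal.Quotient.mk J x) := rfl
    rw [this, ← _root_.map_zero e, e.injective.eq_iff]
    exact Ideal.Quotient.eq_zero_iff_mem
  -- abbreviations
  set m1 := k * (n - k) with hm1
  set m2 := n * n - k * (n - k) with hm2
  set cJ := Nat.card (RingHom.ker φ) with hcJdef
  set a := Nat.card {V : Submodule R (Fin n → R) // FC R n k V} with ha
  set gR := Nat.card (Matrix (Fin n) (Fin n) R)ˣ with hgR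
  set pR := Nat.card {u : (Matrix (Fin n) (Fin n) R)ˣ // btP R n k u.1} with hpR
  set gB := Nat.card (Matrix (Fin n) (Fin n) (∀ i, F i))ˣ with hgB
  set pB := Nat.card {u : (Matrix (Fin n) (Fin n) (∀ i, F i))ˣ // btP (∀ i, F i) n k u.1}
    with hpB
  have h1 : gR = a * pR := card_GL_eq_card_FC_mul_card_btP hkn
  have h2 : gR = gB * cJ ^ (n * n) := card_units_eq φ hφ hu
  have h3 : pR = pB * cJ ^ m2 := card_par_eq φ hkn hφ hu
  have h4 : gB = ∏ i, Nat.card (Matrix (Fin n) (Fin n) (F i))ˣ := card_GL_pi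
  have h5 : pB = ∏ i, Nat.card {u : (Matrix (Fin n) (Fin n) (F i))ˣ // btP (F i) n k u.1} :=
    card_P_pi
  have h6 : ∀ i, Nat.card (Matrix (Fin n) (Fin n) (F i))ˣ =
      Nat.card {V : Submodule (F i) (Fin n → F i) // FC (F i) n k V} *
        Nat.card {u : (Matrix (Fin n) (Fin n) (F i))ˣ // btP (F i) n k u.1} :=
    fun i => card_GL_eq_card_FC_mul_card_btP hkn
  have hexp : m1 + m2 = n * n := by
    have : k * (n - k) ≤ n * n := Nat.mul_le_mul hkn (Nat.sub_le n k)
    omega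
  -- positivity
  have hpBpos : 0 < pB := by
    rw [hpB]
    haveI : Nonempty {u : (Matrix (Fin n) (Fin n) (∀ i, F i))ˣ //
        btP (∀ i, F i) n k u.1} := ⟨⟨1, by rw [Units.val_one]; exact btP_one⟩⟩
    exact Nat.card_pos
  have hcJpos : 0 < cJ := by
    rw [hcJdef]
    haveI : Nonempty (RingHom.ker φ) := ⟨0, zero_mem _⟩
    exact Nat.card_pos
  -- main computation
  have key : a * (pB * cJ ^ m2) =
      (cJ ^ m1 * ∏ i, Nat.card {V : Submodule (F i) (Fin n → F i) // FC (F i) n k V}) *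
        (pB * cJ ^ m2) := by
    calc a * (pB * cJ ^ m2) = a * pR := by rw [h3]
      _ = gR := h1.symm
      _ = gB * cJ ^ (n * n) := h2
      _ = (∏ i, Nat.card (Matrix (Fin n) (Fin n) (F i))ˣ) * cJ ^ (n * n) := by rw [h4]
      _ = (∏ i, Nat.card {V : Submodule (F i) (Fin n → F i) // FC (F i) n k V} *
            Nat.card {u : (Matrix (Fin n) (Fin n) (F i))ˣ // btP (F i) n k u.1}) *
            cJ ^ (n * n) := by
        rw [Finset.prod_congr rfl fun i _ => h6 i]
      _ = ((∏ i, Nat.card {V : Submodule (F i) (Fin n → F i) // FC (F i) n k V}) *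
            (∏ i, Nat.card {u : (Matrix (Fin n) (Fin n) (F i))ˣ // btP (F i) n k u.1})) *
            cJ ^ (n * n) := by rw [Finset.prod_mul_distrib]
      _ = ((∏ i, Nat.card {V : Submodule (F i) (Fin n → F i) // FC (F i) n k V}) * pB) *
            (cJ ^ m1 * cJ ^ m2) := by rw [h5, ← pow_add, hexp]
      _ = _ := by ring
  have hcancel : a = cJ ^ m1 *
      ∏ i, Nat.card {V : Submodule (F i) (Fin n → F i) // FC (F i) n k V} :=
    Nat.eq_of_mul_eq_mul_right (Nat.mul_pos hpBpos (pow_pos hcJpos m2)) key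
  have hJcard : cJ = Nat.card J := by rw [hcJdef, hker]
  have hfin : ∀ i, Nat.card {V : Submodule (F i) (Fin n → F i) // FC (F i) n k V} =
      Nat.card {W : Submodule (F i) (Fin n → F i) // Module.finrank (F i) W = k} :=
    fun i => card_fc_eq_card_finrank
  show a = Nat.card J ^ m1 * ∏ i,
    Nat.card {W : Submodule (F i) (Fin n → F i) // Module.finrank (F i) W = k}
  rw [hcancel, hJcard, Finset.prod_congr rfl fun i _ => hfin i]
end

section
/- Let R be a Dedekind domain, S ⊆ R a multiplicatively closed set, and R_S = S^{-1}R. If V is a free rank-k direct summand of (R_S)^n, then V ∩ R^n is a projective rank-k direct summand of R^n, and (V ∩ R^n) ⊗_R R_S ≅ V. -/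
private lemma aux_nzsd_of_injective {R M N : Type*} [CommRing R] [AddCommGroup M]
    [AddCommGroup N] [Module R M] [Module R N] [NoZeroSMulDivisors R N] (f : M →ₗ[R] N)
    (hf : Function.Injective f) : NoZeroSMulDivisors R M := by
  constructor
  intro c x h
  have h2 : c • f x = 0 := by rw [← map_smul, h, map_zero]
  rcases eq_zero_or_eq_zero_of_smul_eq_zero h2 with h3 | h3
  · exact Or.inl h3
  · exact Or.inr (hf (by rw [h3, map_zero]))

private lemma aux_nzsd_restrict {R A M : Type*} [CommRing R] [CommRing A] [Algebra R A]
    [AddCommGroup M] [Module A M] [Module R M] [IsScalarTower R A M]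
    (hinj : Function.Injective (algebraMap R A)) [NoZeroSMulDivisors A M] :
    NoZeroSMulDivisors R M := by
  constructor
  intro c x h
  have h2 : algebraMap R A c • x = 0 := by rw [algebraMap_smul, h]
  rcases eq_zero_or_eq_zero_of_smul_eq_zero h2 with h3 | h3
  · exact Or.inl (hinj (by rw [h3, map_zero]))
  · exact Or.inr h3

private lemma aux_localized_nzsd {R : Type*} [CommRing R] [IsDomain R]
    (S : Submonoid R) (hS : S ≤ nonZeroDivisors R) {M : Type*} [AddCommGroup M] [Module R M]
    [NoZeroSMulDivisors R M] :
    NoZeroSMulDivisors (Localization S) (LocalizedModule S M) := by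
  constructor
  intro c x h
  obtain ⟨⟨r, s⟩, rfl⟩ := IsLocalization.mk'_surjective S c
  dsimp only at h ⊢
  induction x using LocalizedModule.induction_on with
  | h m t =>
    by_cases hr : r = 0
    · left; rw [hr, IsLocalization.mk'_zero]
    · right
      rw [← Localization.mk_eq_mk'_apply, LocalizedModule.mk_smul_mk] at h
      rw [show (0 : LocalizedModule S M) = LocalizedModule.mk (0 : M) (s * t) from
        (LocalizedModule.zero_mk _).symm, LocalizedModule.mk_eq] at h
      obtain ⟨u, hu⟩ := h
      rw [smul_zero, smul_zero] at hu
      have hu' : ((u : R) * ((s : R) * (t : R)) * r) • m = 0 := by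
        rw [mul_smul, mul_smul]
        simpa [Submonoid.smul_def, Submonoid.coe_mul, mul_smul] using hu
      have hne : (u : R) * ((s : R) * (t : R)) * r ≠ 0 := by
        apply mul_ne_zero
        apply mul_ne_zero
        · exact nonZeroDivisors.ne_zero (hS u.2)
        · exact mul_ne_zero (nonZeroDivisors.ne_zero (hS s.2))
            (nonZeroDivisors.ne_zero (hS t.2))
        · exact hr
      have hm : m = 0 := by
        rcases eq_zero_or_eq_zero_of_smul_eq_zero hu' with h' | h'
        · exact absurd h' hne
        · exact h'
      rw [hm, LocalizedModule.zero_mk]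

private theorem aux_projective_of_fg_tf (R M : Type*) [CommRing R] [IsDomain R]
    [IsDedekindDomain R] [AddCommGroup M] [Module R M] [Module.Finite R M]
    [NoZeroSMulDivisors R M] : Module.Projective R M := by
  by_cases hF : IsField R
  · letI := hF.toField
    infer_instance
  · haveI : Module.FinitePresentation R M := Module.finitePresentation_of_finite R M
    apply Module.projective_of_localization_maximal
    intro P hP
    haveI : IsDomain (Localization.AtPrime P) :=
      IsLocalization.isDomain_of_le_nonZeroDivisors (Localization.AtPrime P) P.primeCompl_le_nonZeroDivisors
    haveI : IsDiscreteValuationRing (Localization.AtPrime P) :=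
      IsLocalization.AtPrime.isDiscreteValuationRing_of_dedekind_domain R
        (Ring.ne_bot_of_isMaximal_of_not_isField hP hF) _
    haveI : NoZeroSMulDivisors (Localization.AtPrime P) (LocalizedModule P.primeCompl M) :=
      aux_localized_nzsd P.primeCompl P.primeCompl_le_nonZeroDivisors
    haveI : Module.Finite (Localization.AtPrime P) (LocalizedModule P.primeCompl M) :=
      inferInstance
    infer_instance

set_option maxHeartbeats 2000000 in
/-- Over a Dedekind domain `R` with localization `R_S`: if `V` is a free rank-`k` direct
summand of `(R_S)ⁿ`, then `V ∩ Rⁿ` is a projective rank-`k` direct summand of `Rⁿ`, and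
`(V ∩ Rⁿ) ⊗_R R_S ≅ V`. -/
theorem stmt_12 (R : Type*) [CommRing R] [IsDomain R] [IsDedekindDomain R]
    (S : Submonoid R) (hS : S ≤ nonZeroDivisors R) (n k : ℕ)
    (V : Submodule (Localization S) (Fin n → Localization S))
    (hVfree : Module.Free (Localization S) V)
    (hVrank : Module.rank (Localization S) V = k)
    (hVsummand : ∃ C, IsCompl V C) :
    ∀ N : Submodule R (Fin n → R),
      N = Submodule.comap
            (LinearMap.pi fun i : Fin n =>
              (Algebra.linearMap R (Localization S)).comp (LinearMap.proj i))
            (V.restrictScalars R) →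
      Module.Projective R N ∧ Module.rank R N = k ∧
        (∃ C : Submodule R (Fin n → R), IsCompl N C) ∧
        Nonempty ((LocalizedModule S N) ≃ₗ[Localization S] V) := by
  intro N hN
  obtain ⟨C, hC⟩ := hVsummand
  set A := Localization S with hA
  haveI : IsDomain A := IsLocalization.isDomain_of_le_nonZeroDivisors A hS
  set F : (Fin n → R) →ₗ[R] (Fin n → A) := LinearMap.pi fun i : Fin n =>
      (Algebra.linearMap R A).comp (LinearMap.proj i) with hFdef
  have hFapp : ∀ (x : Fin n → R) (i : Fin n), F x i = algebraMap R A (x i) := by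
    intro x i
    simp [hFdef]
  have halg : Function.Injective (algebraMap R A) := IsLocalization.injective _ hS
  have hFinj : Function.Injective F := by
    intro x y hxy
    funext i
    apply halg
    rw [← hFapp, ← hFapp, hxy]
  have hmem : ∀ x : Fin n → R, x ∈ N ↔ F x ∈ V := by
    intro x
    rw [hN]
    exact Iff.rfl
  -- torsion-free quotient
  let π : (Fin n → A) →ₗ[A] C := C.linearProjOfIsCompl V hC.symm
  have hkerπ : LinearMap.ker π = V := Submodule.linearProjOfIsCompl_ker hC.symm
  let g : (Fin n → R) →ₗ[R] C := (π.restrictScalars R) ∘ₗ F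
  have hkerg : LinearMap.ker g = N := by
    rw [hN, LinearMap.ker_comp, LinearMap.ker_restrictScalars, hkerπ]
  let φ : ((Fin n → R) ⧸ N) →ₗ[R] C := N.liftQ g hkerg.ge
  have hφinj : Function.Injective φ := by
    rw [← LinearMap.ker_eq_bot]
    exact Submodule.ker_liftQ_eq_bot N g hkerg.ge hkerg.le
  haveI : NoZeroSMulDivisors A C := aux_nzsd_of_injective C.subtype Subtype.val_injective
  haveI : NoZeroSMulDivisors R C := aux_nzsd_restrict halg
  haveI : NoZeroSMulDivisors R ((Fin n → R) ⧸ N) := aux_nzsd_of_injective φ hφinj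
  haveI : Module.Finite R ((Fin n → R) ⧸ N) :=
    Module.Finite.of_surjective N.mkQ (Submodule.mkQ_surjective N)
  haveI : Module.Projective R ((Fin n → R) ⧸ N) := aux_projective_of_fg_tf R _
  -- splitting
  obtain ⟨h, hh⟩ := Module.projective_lifting_property N.mkQ LinearMap.id
    (Submodule.mkQ_surjective N)
  have hsec : ∀ y, N.mkQ (h y) = y := by
    intro y
    rw [← LinearMap.comp_apply, hh, LinearMap.id_apply]
  have hcompl : IsCompl N (LinearMap.range h) := by
    constructor
    · rw [Submodule.disjoint_def]
      rintro x hxN ⟨y, rfl⟩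
      have hy : y = 0 := by
        rw [← hsec y, Submodule.mkQ_apply, Submodule.Quotient.mk_eq_zero]
        exact hxN
      rw [hy, map_zero]
    · rw [codisjoint_iff_le_sup]
      intro x _
      refine Submodule.mem_sup.mpr ⟨x - h (N.mkQ x), ?_, h (N.mkQ x), ⟨N.mkQ x, rfl⟩, ?_⟩
      · rw [← Submodule.Quotient.mk_eq_zero N]
        have : N.mkQ (x - h (N.mkQ x)) = 0 := by
          rw [map_sub, hsec, sub_self]
        simpa using this
      · abel
  have hprojN : Module.Projective R N :=
    Module.Projective.of_split N.subtype (N.projectionOnto _ hcompl)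
      (by ext x; simp [Submodule.projectionOnto_apply_left])
  -- the localization map
  let fN : N →ₗ[R] V :=
    { toFun := fun x => ⟨F x.1, (hmem x.1).mp x.2⟩
      map_add' := fun x y => Subtype.ext (by simp)
      map_smul' := fun r x => Subtype.ext (by simp) }
  have hfNapp : ∀ x : N, (fN x : Fin n → A) = F x.1 := fun _ => rfl
  haveI hloc : IsLocalizedModule S fN := by
    constructor
    · intro s
      have hu : IsUnit (algebraMap R A (s : R)) := IsLocalization.map_units A s
      refine isUnit_iff_exists.mpr
        ⟨(LinearMap.lsmul A V ((hu.unit⁻¹ : Aˣ) : A)).restrictScalars R, ?_, ?_⟩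
      · ext x
        rw [Module.End.mul_apply, Module.algebraMap_end_apply, LinearMap.restrictScalars_apply,
          LinearMap.lsmul_apply, ← algebraMap_smul A (s : R), smul_smul,
          IsUnit.mul_val_inv, one_smul, Module.End.one_apply]
      · ext x
        rw [Module.End.mul_apply, Module.algebraMap_end_apply, LinearMap.restrictScalars_apply,
          LinearMap.lsmul_apply, ← algebraMap_smul A (s : R), smul_smul,
          IsUnit.val_inv_mul, one_smul, Module.End.one_apply]
    · intro y
      obtain ⟨b, hb⟩ := IsLocalization.exist_integer_multiples_of_finite S
        (fun i : Fin n => (y : Fin n → A) i)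
      have hb' : ∀ i : Fin n, ∃ r : R, algebraMap R A r = (b : R) • (y : Fin n → A) i :=
        fun i => hb i
      choose c hc using hb'
      have hcV : F c ∈ V := by
        have : F c = (b : R) • (y : Fin n → A) := by
          funext i
          rw [hFapp]
          exact hc i
        rw [this]
        exact Submodule.smul_of_tower_mem V (b : R) y.2
      refine ⟨(⟨c, (hmem c).mpr hcV⟩, b), ?_⟩
      apply Subtype.ext
      show (b : R) • (y : Fin n → A) = F c
      funext i
      rw [hFapp]
      exact (hc i).symm
    · intro x₁ x₂ hx
      refine ⟨1, ?_⟩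
      have : F x₁.1 = F x₂.1 := congrArg Subtype.val hx
      have hx12 : x₁ = x₂ := Subtype.ext (hFinj this)
      rw [hx12]
  -- the localized module iso
  let e0 := IsLocalizedModule.iso S fN
  let φA : LocalizedModule S N →ₗ[A] V :=
    LinearMap.extendScalarsOfIsLocalization S A e0.toLinearMap
  have hφAbij : Function.Bijective φA := e0.bijective
  let e : LocalizedModule S N ≃ₗ[A] V := LinearEquiv.ofBijective φA hφAbij
  -- rank
  have hrank : Module.rank R N = k := by
    have := IsLocalizedModule.rank_eq (p := S) (hp := hS) (f := fN)
    rw [← this, ← IsLocalization.rank_eq A S hS, hVrank]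
  exact ⟨hprojN, hrank, ⟨LinearMap.range h, hcompl⟩, ⟨e⟩⟩
end

section
/- Let R be a commutative ring such that SL_{n-1}(R) is generated by elementary matrices. Then the stabilizer in SL_n(R) of the line R·e_1 is generated by the set {e_{ij}(λ) : j ≠ 1, λ ∈ R} ∪ {t(r) : r ∈ R^×}, where t(r) = diag(r, r^{-1}, 1, ..., 1). -/
open Matrix

namespace St17

variable {R : Type*} [CommRing R] {m : ℕ}

/-- Transvection as an element of SL. -/
def Tv {k : ℕ} (i j : Fin k) (hij : i ≠ j) (c : R) :
    Matrix.SpecialLinearGroup (Fin k) R :=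
  ⟨Matrix.transvection i j c, Matrix.det_transvection_of_ne i j hij c⟩

lemma coe_Tv {k : ℕ} (i j : Fin k) (hij : i ≠ j) (c : R) :
    (Tv i j hij c : Matrix (Fin k) (Fin k) R) = 1 + Matrix.single i j c := rfl

/-- The generating set in SL_{m+2}. -/
def genSet (R : Type*) [CommRing R] (m : ℕ) :
    Set (Matrix.SpecialLinearGroup (Fin (m+2)) R) :=
  {A | ∃ i j : Fin (m+2), ∃ lam : R, i ≠ j ∧ j ≠ 0 ∧
      (A : Matrix (Fin (m+2)) (Fin (m+2)) R) = 1 + Matrix.single i j lam} ∪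
  {A | ∃ r : Rˣ, (A : Matrix (Fin (m+2)) (Fin (m+2)) R)
      = Matrix.diagonal (fun l : Fin (m+2) =>
          if l = 0 then (r : R) else if l = 1 then ((r⁻¹ : Rˣ) : R) else 1)}

/-- generating set of the smaller group -/
def genSmall (R : Type*) [CommRing R] (k : ℕ) :
    Set (Matrix.SpecialLinearGroup (Fin k) R) :=
  {A | ∃ i j : Fin k, ∃ lam : R, i ≠ j ∧
      (A : Matrix (Fin k) (Fin k) R) = 1 + Matrix.single i j lam}

def dvec (r : Rˣ) (m : ℕ) : Fin (m+2) → R :=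
  fun l => if l = 0 then (r : R) else if l = 1 then ((r⁻¹ : Rˣ) : R) else 1

lemma det_dvec (r : Rˣ) : Matrix.det (Matrix.diagonal (dvec r m)) = 1 := by
  rw [Matrix.det_diagonal, Fin.prod_univ_succ, Fin.prod_univ_succ]
  simp [dvec, Fin.succ_ne_zero, Fin.succ_succ_ne_one]

def tDiag (r : Rˣ) : Matrix.SpecialLinearGroup (Fin (m+2)) R :=
  ⟨Matrix.diagonal (dvec r m), det_dvec r⟩

lemma tDiag_mul_tDiag (r : Rˣ) : (tDiag (m := m) (R := R) r⁻¹) * tDiag r = 1 := by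
  ext i j
  simp only [Matrix.SpecialLinearGroup.coe_mul, tDiag, Matrix.diagonal_mul_diagonal]
  rw [Matrix.SpecialLinearGroup.coe_one]
  show (Matrix.diagonal (dvec r⁻¹ m) * Matrix.diagonal (dvec r m)) i j = _
  simp only [Matrix.diagonal_mul_diagonal]
  rw [← Matrix.diagonal_one]
  congr 1
  funext l
  rcases eq_or_ne l 0 with rfl | h0
  · simp [dvec]
  rcases eq_or_ne l 1 with rfl | h1
  · simp [dvec]
  · simp [dvec, h0, h1]

lemma inv_tDiag (r : Rˣ) : (tDiag (m := m) (R := R) r)⁻¹ = tDiag r⁻¹ :=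
  (eq_comm.mp (eq_inv_of_mul_eq_one_left (tDiag_mul_tDiag r)))

/-- embedding of matrices -/
def embMat (A : Matrix (Fin (m+1)) (Fin (m+1)) R) : Matrix (Fin (m+2)) (Fin (m+2)) R :=
  Matrix.of (Fin.cons (Fin.cons 1 0) (fun i' => Fin.cons 0 (A i')))

@[simp] lemma embMat_zero_zero (A : Matrix (Fin (m+1)) (Fin (m+1)) R) :
    embMat A 0 0 = 1 := rfl

@[simp] lemma embMat_zero_succ (A : Matrix (Fin (m+1)) (Fin (m+1)) R) (j : Fin (m+1)) :
    embMat A 0 j.succ = 0 := by simp [embMat]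

@[simp] lemma embMat_succ_zero (A : Matrix (Fin (m+1)) (Fin (m+1)) R) (i : Fin (m+1)) :
    embMat A i.succ 0 = 0 := by simp [embMat]

@[simp] lemma embMat_succ_succ (A : Matrix (Fin (m+1)) (Fin (m+1)) R) (i j : Fin (m+1)) :
    embMat A i.succ j.succ = A i j := by simp [embMat]

lemma embMat_one : embMat (1 : Matrix (Fin (m+1)) (Fin (m+1)) R) = 1 := by
  ext i j
  induction i using Fin.cases with
  | zero => induction j using Fin.cases with
    | zero => simp
    | succ j => simp [Matrix.one_apply, (Fin.succ_ne_zero j).symm]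
  | succ i => induction j using Fin.cases with
    | zero => simp [Matrix.one_apply, Fin.succ_ne_zero i]
    | succ j => simp [Matrix.one_apply, Fin.succ_inj]

lemma embMat_mul (A B : Matrix (Fin (m+1)) (Fin (m+1)) R) :
    embMat A * embMat B = embMat (A * B) := by
  ext i j
  rw [Matrix.mul_apply, Fin.sum_univ_succ]
  induction i using Fin.cases with
  | zero => induction j using Fin.cases with
    | zero => simp
    | succ j => simp
  | succ i => induction j using Fin.cases with
    | zero => simp
    | succ j => simp [Matrix.mul_apply]

lemma det_embMat (A : Matrix (Fin (m+1)) (Fin (m+1)) R) :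
    (embMat A).det = A.det := by
  have h : (embMat A).submatrix Fin.succ Fin.succ = A := by
    ext i j; simp
  rw [Matrix.det_succ_row_zero, Fin.sum_univ_succ]
  simp [Fin.zero_succAbove, h]

def embSL (A : Matrix.SpecialLinearGroup (Fin (m+1)) R) :
    Matrix.SpecialLinearGroup (Fin (m+2)) R :=
  ⟨embMat (A : Matrix (Fin (m+1)) (Fin (m+1)) R), by rw [det_embMat]; exact A.2⟩


lemma Tv_mem (i j : Fin (m+2)) (hij : i ≠ j) (hj : j ≠ 0) (c : R) :
    Tv i j hij c ∈ Subgroup.closure (genSet R m) :=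
  Subgroup.subset_closure (Or.inl ⟨i, j, c, hij, hj, rfl⟩)

lemma tDiag_mem (r : Rˣ) :
    tDiag (m := m) r ∈ Subgroup.closure (genSet R m) :=
  Subgroup.subset_closure (Or.inr ⟨r, rfl⟩)

lemma embSL_one : embSL (1 : Matrix.SpecialLinearGroup (Fin (m+1)) R) = 1 := by
  ext i j
  rw [embSL]
  simp only [Matrix.SpecialLinearGroup.coe_one]
  rw [embMat_one]

lemma embSL_mul (A B : Matrix.SpecialLinearGroup (Fin (m+1)) R) :
    embSL (A * B) = embSL A * embSL B := by
  ext i j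
  simp only [embSL, Matrix.SpecialLinearGroup.coe_mul, ← embMat_mul]
  rfl

lemma embSL_inv (A : Matrix.SpecialLinearGroup (Fin (m+1)) R) :
    embSL A⁻¹ = (embSL A)⁻¹ := by
  apply eq_inv_of_mul_eq_one_left
  rw [← embSL_mul, inv_mul_cancel, embSL_one]

lemma embSL_mem (hgen : Subgroup.closure (genSmall R (m+1))
      = (⊤ : Subgroup (Matrix.SpecialLinearGroup (Fin (m+1)) R)))
    (A : Matrix.SpecialLinearGroup (Fin (m+1)) R) :
    embSL A ∈ Subgroup.closure (genSet R m) := by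
  have hA : A ∈ Subgroup.closure (genSmall R (m+1)) := hgen ▸ Subgroup.mem_top A
  induction hA using Subgroup.closure_induction with
  | mem x hx =>
    obtain ⟨i, j, lam, hij, hx⟩ := hx
    have hco : embSL x = Tv i.succ j.succ (by simpa [Fin.succ_inj] using hij) lam := by
      apply Subtype.ext
      show embMat (x : Matrix (Fin (m+1)) (Fin (m+1)) R) = _
      rw [hx, coe_Tv]
      ext a b
      induction a using Fin.cases with
      | zero => induction b using Fin.cases with
        | zero => simp [Matrix.one_apply, Matrix.single, Fin.succ_ne_zero,
            (Fin.succ_ne_zero i).symm]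
        | succ b => simp [Matrix.one_apply, Matrix.single, Fin.succ_ne_zero,
            (Fin.succ_ne_zero b).symm]
      | succ a => induction b using Fin.cases with
        | zero => simp [Matrix.one_apply, Matrix.single, Fin.succ_ne_zero]
        | succ b => simp [Matrix.one_apply, Matrix.single, Fin.succ_inj]
    rw [hco]
    exact Tv_mem _ _ _ (Fin.succ_ne_zero j) lam
  | one => rw [embSL_one]; exact one_mem _
  | mul x y hx hy ihx ihy => rw [embSL_mul]; exact mul_mem ihx ihy
  | inv x hx ihx => rw [embSL_inv]; exact inv_mem ihx

lemma row_clear (w : Fin (m+2) → R) :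
    ∀ s : Finset (Fin (m+2)), (0 : Fin (m+2)) ∉ s →
    ∃ P : Matrix.SpecialLinearGroup (Fin (m+2)) R,
      (P : Matrix (Fin (m+2)) (Fin (m+2)) R)
          = 1 + ∑ j ∈ s, Matrix.single 0 j (w j) ∧
        P ∈ Subgroup.closure (genSet R m) := by
  intro s
  induction s using Finset.induction_on with
  | empty => exact fun _ => ⟨1, by simp, one_mem _⟩
  | @insert k s hks ih =>
    intro hk
    have h0k : (0 : Fin (m+2)) ∉ s := fun h => hk (Finset.mem_insert_of_mem h)
    have hk0 : k ≠ 0 := fun h => hk (h ▸ Finset.mem_insert_self k s)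
    obtain ⟨P, hP, hPmem⟩ := ih h0k
    refine ⟨P * Tv 0 k (Ne.symm hk0) (w k), ?_, mul_mem hPmem (Tv_mem _ _ _ hk0 _)⟩
    rw [Matrix.SpecialLinearGroup.coe_mul, hP, coe_Tv, Finset.sum_insert hks]
    have hzero : (∑ j ∈ s, Matrix.single (0 : Fin (m+2)) j (w j))
        * Matrix.single (0 : Fin (m+2)) k (w k) = 0 := by
      rw [Finset.sum_mul]
      refine Finset.sum_eq_zero fun j hj => ?_
      exact Matrix.single_mul_single_of_ne (c := w j) 0 j 0
        (show j ≠ 0 from fun h => h0k (h ▸ hj)) (w k)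
    rw [mul_add, mul_one, add_mul, one_mul, hzero, add_zero]
    abel


lemma backward (m : ℕ) (g : Matrix.SpecialLinearGroup (Fin (m+2)) R)
    (hg : g ∈ Subgroup.closure (genSet R m)) :
    Submodule.map (Matrix.toLin' (g : Matrix (Fin (m+2)) (Fin (m+2)) R))
        (Submodule.span R {(Pi.single 0 1 : Fin (m+2) → R)})
      = Submodule.span R {(Pi.single 0 1 : Fin (m+2) → R)} := by
  induction hg using Subgroup.closure_induction with
  | mem x hx =>
    rw [Submodule.map_span, Set.image_singleton, Matrix.toLin'_apply]
    rcases hx with ⟨i, j, lam, hij, hj0, hx⟩ | ⟨r, hx⟩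
    · rw [hx]
      have : ((1 + Matrix.single i j lam) *ᵥ (Pi.single 0 1 : Fin (m+2) → R))
          = Pi.single 0 1 := by
        ext a
        simp [Matrix.one_apply, Matrix.single, hj0, Pi.single_apply, eq_comm]
      rw [this]
    · rw [hx]
      have : (Matrix.diagonal (fun l : Fin (m+2) =>
          if l = 0 then (r : R) else if l = 1 then ((r⁻¹ : Rˣ) : R) else 1)
            *ᵥ (Pi.single 0 1 : Fin (m+2) → R))
          = (r : R) • (Pi.single 0 1 : Fin (m+2) → R) := by
        rw [Matrix.diagonal_mulVec_single]
        ext a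
        simp [Pi.single_apply]
      rw [this]
      exact Submodule.span_singleton_smul_eq r.isUnit _
  | one => rw [Matrix.SpecialLinearGroup.coe_one, Matrix.toLin'_one, Submodule.map_id]
  | mul x y hx hy ihx ihy =>
    rw [Matrix.SpecialLinearGroup.coe_mul, Matrix.toLin'_mul, Submodule.map_comp, ihy, ihx]
  | inv x hx ihx =>
    have hxx : ((x⁻¹ : Matrix.SpecialLinearGroup (Fin (m+2)) R) : Matrix (Fin (m+2)) (Fin (m+2)) R)
        * (x : Matrix (Fin (m+2)) (Fin (m+2)) R) = 1 := by
      rw [← Matrix.SpecialLinearGroup.coe_mul, inv_mul_cancel,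
        Matrix.SpecialLinearGroup.coe_one]
    calc Submodule.map (Matrix.toLin' ((x⁻¹ : Matrix.SpecialLinearGroup (Fin (m+2)) R)
            : Matrix (Fin (m+2)) (Fin (m+2)) R))
          (Submodule.span R {(Pi.single 0 1 : Fin (m+2) → R)})
        = Submodule.map (Matrix.toLin' ((x⁻¹ : Matrix.SpecialLinearGroup (Fin (m+2)) R)
            : Matrix (Fin (m+2)) (Fin (m+2)) R))
          (Submodule.map (Matrix.toLin' (x : Matrix (Fin (m+2)) (Fin (m+2)) R))
            (Submodule.span R {(Pi.single 0 1 : Fin (m+2) → R)})) := by rw [ihx]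
      _ = Submodule.map (Matrix.toLin' (((x⁻¹ : Matrix.SpecialLinearGroup (Fin (m+2)) R)
            : Matrix (Fin (m+2)) (Fin (m+2)) R) * (x : Matrix (Fin (m+2)) (Fin (m+2)) R)))
          (Submodule.span R {(Pi.single 0 1 : Fin (m+2) → R)}) := by
            rw [Matrix.toLin'_mul, Submodule.map_comp]
      _ = Submodule.span R {(Pi.single 0 1 : Fin (m+2) → R)} := by
            rw [hxx, Matrix.toLin'_one, Submodule.map_id]


lemma forward (m : ℕ)
    (hgen : Subgroup.closure (genSmall R (m+1))
      = (⊤ : Subgroup (Matrix.SpecialLinearGroup (Fin (m+1)) R)))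
    (g : Matrix.SpecialLinearGroup (Fin (m+2)) R)
    (hmap : Submodule.map (Matrix.toLin' (g : Matrix (Fin (m+2)) (Fin (m+2)) R))
        (Submodule.span R {(Pi.single 0 1 : Fin (m+2) → R)})
      = Submodule.span R {(Pi.single 0 1 : Fin (m+2) → R)}) :
    g ∈ Subgroup.closure (genSet R m) := by
  have e0mem : (Pi.single 0 1 : Fin (m+2) → R) ∈
      Submodule.span R {(Pi.single 0 1 : Fin (m+2) → R)} :=
    Submodule.mem_span_singleton_self _
  -- the image of e0 is a multiple of e0
  have h1 : (g : Matrix (Fin (m+2)) (Fin (m+2)) R) *ᵥ (Pi.single 0 1 : Fin (m+2) → R) ∈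
      Submodule.span R {(Pi.single 0 1 : Fin (m+2) → R)} := by
    rw [← Matrix.toLin'_apply, ← hmap]
    exact Submodule.mem_map_of_mem e0mem
  obtain ⟨c, hc⟩ := Submodule.mem_span_singleton.mp h1
  -- e0 is in the image
  have h2 : (Pi.single 0 1 : Fin (m+2) → R) ∈
      Submodule.map (Matrix.toLin' (g : Matrix (Fin (m+2)) (Fin (m+2)) R))
        (Submodule.span R {(Pi.single 0 1 : Fin (m+2) → R)}) := hmap.symm ▸ e0mem
  obtain ⟨y, hy, hgy⟩ := h2
  obtain ⟨d, hd⟩ := Submodule.mem_span_singleton.mp hy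
  have hdc : d * c = 1 := by
    have h3 : (d * c) • (Pi.single 0 1 : Fin (m+2) → R) = Pi.single 0 1 := by
      rw [mul_smul, hc, ← Matrix.toLin'_apply, ← _root_.map_smul, hd, hgy]
    have h4 := congrFun h3 0
    simpa using h4
  have hcu : IsUnit c := IsUnit.of_mul_eq_one d (by rw [mul_comm]; exact hdc)
  -- column facts
  have hcol : ∀ i : Fin (m+2), (g : Matrix (Fin (m+2)) (Fin (m+2)) R) i 0
      = c * (if i = 0 then 1 else 0) := by
    intro i
    have := congrFun hc i
    simp only [Matrix.mulVec_single, mul_one, Pi.smul_apply, Pi.single_apply,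
      smul_eq_mul, MulOpposite.op_one, one_smul, Matrix.col_apply] at this
    rw [← this]
  set u : Rˣ := hcu.unit with hu
  have huc : (u : R) = c := hcu.unit_spec
  -- g1 = tDiag u⁻¹ * g
  set g1 : Matrix.SpecialLinearGroup (Fin (m+2)) R := tDiag u⁻¹ * g with hg1def
  have hg1coe : (g1 : Matrix (Fin (m+2)) (Fin (m+2)) R)
      = Matrix.diagonal (dvec u⁻¹ m) * (g : Matrix (Fin (m+2)) (Fin (m+2)) R) := rfl
  have hg1_00 : (g1 : Matrix (Fin (m+2)) (Fin (m+2)) R) 0 0 = 1 := by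
    rw [hg1coe, Matrix.diagonal_mul, hcol 0]
    simp [dvec, huc]
  have hg1_i0 : ∀ i : Fin (m+2), i ≠ 0 → (g1 : Matrix (Fin (m+2)) (Fin (m+2)) R) i 0 = 0 := by
    intro i hi
    rw [hg1coe, Matrix.diagonal_mul, hcol i, if_neg hi, mul_zero, mul_zero]
  -- clear the first row
  obtain ⟨P, hP, hPmem⟩ := row_clear
    (fun k => -((g1 : Matrix (Fin (m+2)) (Fin (m+2)) R) 0 k))
    (Finset.univ.erase 0) (by simp)
  set g2 : Matrix.SpecialLinearGroup (Fin (m+2)) R := g1 * P with hg2def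
  have hg2 : ∀ a b : Fin (m+2), (g2 : Matrix (Fin (m+2)) (Fin (m+2)) R) a b
      = (g1 : Matrix (Fin (m+2)) (Fin (m+2)) R) a b
        + (if b = 0 then 0 else (g1 : Matrix (Fin (m+2)) (Fin (m+2)) R) a 0
            * (-((g1 : Matrix (Fin (m+2)) (Fin (m+2)) R) 0 b))) := by
    intro a b
    rw [hg2def, Matrix.SpecialLinearGroup.coe_mul, hP, mul_add, mul_one, Matrix.add_apply,
      Matrix.mul_sum]
    congr 1
    have hterm : ∀ j ∈ Finset.univ.erase (0 : Fin (m+2)),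
        (((g1 : Matrix (Fin (m+2)) (Fin (m+2)) R) *
          Matrix.single 0 j (-((g1 : Matrix (Fin (m+2)) (Fin (m+2)) R) 0 j)) :
            Matrix (Fin (m+2)) (Fin (m+2)) R)) a b
        = if b = j then (g1 : Matrix (Fin (m+2)) (Fin (m+2)) R) a 0
            * (-((g1 : Matrix (Fin (m+2)) (Fin (m+2)) R) 0 j)) else 0 := by
      intro j hj
      rcases eq_or_ne b j with rfl | hbj
      · rw [if_pos rfl]
        exact Matrix.mul_single_apply_same _ 0 b a _
      · rw [if_neg hbj]
        exact Matrix.mul_single_apply_of_ne _ 0 j a b hbj _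
    rw [Matrix.sum_apply, Finset.sum_congr rfl hterm, Finset.sum_ite_eq]
    simp [Finset.mem_erase, eq_comm]
  have hg2_00 : (g2 : Matrix (Fin (m+2)) (Fin (m+2)) R) 0 0 = 1 := by
    rw [hg2 0 0, if_pos rfl, add_zero, hg1_00]
  have hg2_i0 : ∀ i : Fin (m+2), i ≠ 0 → (g2 : Matrix (Fin (m+2)) (Fin (m+2)) R) i 0 = 0 := by
    intro i hi; rw [hg2 i 0, if_pos rfl, add_zero, hg1_i0 i hi]
  have hg2_0b : ∀ b : Fin (m+2), b ≠ 0 → (g2 : Matrix (Fin (m+2)) (Fin (m+2)) R) 0 b = 0 := by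
    intro b hb; rw [hg2 0 b, if_neg hb, hg1_00, one_mul]; ring
  -- the block form
  set A' : Matrix (Fin (m+1)) (Fin (m+1)) R :=
    Matrix.of (fun i j => (g2 : Matrix (Fin (m+2)) (Fin (m+2)) R) i.succ j.succ) with hA'
  have hemb : embMat A' = (g2 : Matrix (Fin (m+2)) (Fin (m+2)) R) := by
    ext a b
    induction a using Fin.cases with
    | zero => induction b using Fin.cases with
      | zero => rw [embMat_zero_zero, hg2_00]
      | succ b => rw [embMat_zero_succ, hg2_0b b.succ (Fin.succ_ne_zero b)]
    | succ a => induction b using Fin.cases with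
      | zero => rw [embMat_succ_zero, hg2_i0 a.succ (Fin.succ_ne_zero a)]
      | succ b => rw [embMat_succ_succ]; rfl
  have hdetA' : A'.det = 1 := by rw [← det_embMat, hemb]; exact g2.2
  have hg2emb : g2 = embSL ⟨A', hdetA'⟩ := Subtype.ext hemb.symm
  have hg2mem : g2 ∈ Subgroup.closure (genSet R m) := by
    rw [hg2emb]; exact embSL_mem hgen _
  have hg1mem : g1 ∈ Subgroup.closure (genSet R m) := by
    have : g1 = g2 * P⁻¹ := by rw [hg2def]; group
    rw [this]; exact mul_mem hg2mem (inv_mem hPmem)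
  have : g = tDiag u * g1 := by
    rw [hg1def, ← mul_assoc, ← inv_tDiag, mul_inv_cancel, one_mul]
  rw [this]
  exact mul_mem (tDiag_mem u) hg1mem

end St17



/-- If `SL_{n-1}(R)` is generated by elementary matrices, then the stabilizer of the line
`R·e₁` in `SLₙ(R)` is generated by the elementary matrices `e_{ij}(λ)` with `j ≠ 1`
together with the matrices `t(r) = diag(r, r⁻¹, 1, …, 1)` for `r ∈ Rˣ`. -/
theorem stmt_17 (R : Type*) [CommRing R] (n : ℕ) (hn : 2 ≤ n)
    (hgen : Subgroup.closure
        {A : Matrix.SpecialLinearGroup (Fin (n - 1)) R |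
          ∃ i j : Fin (n - 1), ∃ lam : R, i ≠ j ∧
            (A : Matrix (Fin (n - 1)) (Fin (n - 1)) R) = 1 + Matrix.single i j lam}
      = (⊤ : Subgroup (Matrix.SpecialLinearGroup (Fin (n - 1)) R))) :
    ∀ g : Matrix.SpecialLinearGroup (Fin n) R,
      (Submodule.map (Matrix.toLin' (g : Matrix (Fin n) (Fin n) R))
          (Submodule.span R {(Pi.single (⟨0, by omega⟩ : Fin n) (1 : R) : Fin n → R)})
        = Submodule.span R {(Pi.single (⟨0, by omega⟩ : Fin n) (1 : R) : Fin n → R)})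
      ↔ g ∈ Subgroup.closure
          ({A : Matrix.SpecialLinearGroup (Fin n) R |
            ∃ i j : Fin n, ∃ lam : R, i ≠ j ∧ j ≠ ⟨0, by omega⟩ ∧
              (A : Matrix (Fin n) (Fin n) R) = 1 + Matrix.single i j lam} ∪
          {A : Matrix.SpecialLinearGroup (Fin n) R |
            ∃ r : Rˣ, (A : Matrix (Fin n) (Fin n) R)
              = Matrix.diagonal (fun l : Fin n =>
                  if l = ⟨0, by omega⟩ then (r : R)
                  else if l = ⟨1, by omega⟩ then ((r⁻¹ : Rˣ) : R) else 1)}) := by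
  obtain ⟨m, rfl⟩ : ∃ m, n = m + 2 := ⟨n - 2, by omega⟩
  intro g
  exact ⟨St17.forward m hgen g, St17.backward m g⟩
end

section
/- Let d_n(q,m) be defined by the recursion d_0 = 1, d_n = ∑_{i=1}^n (−1)^{i−1} g_{n−i,n} m^{i(n−i)} d_{n−i}, where g_{k,n} = |Gr_k^n(F_q)| is the Gaussian binomial coefficient. Then, viewing d_n(q,m) as a polynomial in m for fixed n and q, its leading term (degree binom(n,2) in m) has coefficient ∏_{k=2}^n g_{k−1,k} = ∏_{k=2}^n |P^{k-1}(F_q)|. -/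
/-!
Since `C(n,2) = C(i,2) + C(n-i,2) + i(n-i)`, induction shows that the `i`-th summand of the
recursion has degree at most `C(n,2) - C(i,2)`. So only the `i = 1` summand reaches degree
`C(n,2)`, and the leading coefficients obey `c_n = g_{n-1,n} c_{n-1}`; they are nonzero because
`F_q^k` has subspaces of every dimension `≤ k`, and `g_{0,1} = 1` absorbs the `k = 1` factor.
-/

open Polynomial Finset

theorem Submodule.exists_finrank_eq {K V : Type*} [DivisionRing K] [AddCommGroup V] [Module K V]
    [FiniteDimensional K V] {k : ℕ} (hk : k ≤ Module.finrank K V) :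
    ∃ W : Submodule K V, Module.finrank K W = k := by
  let b := Module.finBasis K V
  refine ⟨span K (Set.range (b ∘ Fin.castLE hk)), ?_⟩
  rw [finrank_span_eq_card (b.linearIndependent.comp _ (Fin.castLE_injective hk)), Fintype.card_fin]

theorem natCard_submodules_finrank_eq_pos (K V : Type*) [DivisionRing K] [Finite K]
    [AddCommGroup V] [Module K V] [FiniteDimensional K V] {k : ℕ}
    (hk : k ≤ Module.finrank K V) :
    0 < Nat.card {W : Submodule K V // Module.finrank K W = k} := by
  have : Finite V := Module.finite_of_finite K
  obtain ⟨W, hW⟩ := Submodule.exists_finrank_eq hk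
  have : Nonempty {W : Submodule K V // Module.finrank K W = k} := ⟨⟨W, hW⟩⟩
  exact Nat.card_pos

theorem Nat.add_choose_two (a b : ℕ) : (a + b).choose 2 = a.choose 2 + b.choose 2 + a * b := by
  induction b with
  | zero => simp
  | succ b ih =>
    rw [← add_assoc, Nat.choose_succ_succ', Nat.choose_succ_succ', ih]
    simp only [Nat.choose_one_right]
    ring

section Recursion

variable {R : Type*} [CommSemiring R]

theorem natDegree_C_mul_X_pow_mul_le_sub_choose_two (c : R) {p : R[X]} {i n : ℕ} (hi : i ≤ n)
    (hp : p.natDegree ≤ (n - i).choose 2) :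
    (C c * X ^ (i * (n - i)) * p).natDegree ≤ n.choose 2 - i.choose 2 := by
  have hn := Nat.add_choose_two i (n - i)
  rw [Nat.add_sub_cancel' hi] at hn
  have := (natDegree_mul_le (p := C c * X ^ (i * (n - i)))).trans
    (add_le_add (natDegree_C_mul_X_pow_le c _) hp)
  omega

variable (a : ℕ → ℕ → R) (d : ℕ → R[X])

theorem natDegree_le_and_coeff_of_recursion (hd0 : d 0 = 1)
    (hrec : ∀ n, 1 ≤ n → d n = ∑ i ∈ Icc 1 n, C (a n i) * X ^ (i * (n - i)) * d (n - i)) :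
    ∀ n, (d n).natDegree ≤ n.choose 2 ∧
      (d n).coeff (n.choose 2) = ∏ k ∈ Icc 1 n, a k 1 := by
  intro n
  induction n using Nat.strong_induction_on with
  | _ n ih =>
  obtain _ | m := n
  · simp [hd0]
  have hterm : ∀ i ∈ Icc 1 (m + 1),
      (C (a (m + 1) i) * X ^ (i * (m + 1 - i)) * d (m + 1 - i)).natDegree ≤
        (m + 1).choose 2 - i.choose 2 := fun i hi =>
    natDegree_C_mul_X_pow_mul_le_sub_choose_two _ (mem_Icc.1 hi).2 (ih _ (by grind)).1
  rw [hrec (m + 1) (by omega)]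
  constructor
  · exact natDegree_sum_le_of_forall_le _ _ fun i hi => (hterm i hi).trans (Nat.sub_le _ _)
  rw [finsetSum_coeff, sum_eq_single_of_mem 1 (by simp)]
  · have hm : (m + 1).choose 2 = m.choose 2 + m := by simp [Nat.choose_succ_succ', add_comm]
    rw [prod_Icc_succ_top (by omega), hm, Nat.add_sub_cancel, one_mul, mul_assoc,
      coeff_C_mul, coeff_X_pow_mul, (ih m m.lt_succ_self).2, mul_comm]
  · intro i hi hi1
    apply coeff_eq_zero_of_natDegree_lt
    have : 1 ≤ i.choose 2 := Nat.choose_pos (by grind)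
    have : i.choose 2 ≤ (m + 1).choose 2 := Nat.choose_le_choose 2 (mem_Icc.1 hi).2
    have := hterm i hi
    omega

end Recursion

/-- The rank `d_n(q,m)` of the Steinberg module, defined by the recursion
`d_n = ∑_{i=1}^n (−1)^{i−1} g_{n−i,n} m^{i(n−i)} d_{n−i}` with `g_{k,n} = |Gr_k^n(F_q)|`,
is (as a polynomial in `m`) of degree `C(n,2)` with leading coefficient
`∏_{k=2}^n g_{k−1,k}`. -/
theorem stmt_19 (F : Type*) [Field F] [Fintype F] (g : ℕ → ℕ → ℤ)
    (hg : ∀ k n : ℕ, g k n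
      = Nat.card {V : Submodule F (Fin n → F) // Module.finrank F V = k})
    (d : ℕ → Polynomial ℤ) (hd0 : d 0 = 1)
    (hdrec : ∀ n : ℕ, 1 ≤ n →
      d n = ∑ i ∈ Finset.Icc 1 n,
        Polynomial.C ((-1 : ℤ) ^ (i - 1) * g (n - i) n)
          * Polynomial.X ^ (i * (n - i)) * d (n - i)) :
    ∀ n : ℕ, (d n).natDegree = n.choose 2 ∧
      (d n).coeff (n.choose 2) = ∏ k ∈ Finset.Icc 2 n, g (k - 1) k := by
  intro n
  obtain ⟨hle, hcoeff⟩ :=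
    natDegree_le_and_coeff_of_recursion (fun n i => (-1) ^ (i - 1) * g (n - i) n) d hd0 hdrec n
  have hprod :
      ∏ k ∈ Icc 1 n, (-1) ^ (1 - 1) * g (k - 1) k = ∏ k ∈ Icc 2 n, g (k - 1) k := by
    simp only [Nat.sub_self, pow_zero, one_mul]
    refine (prod_subset (Icc_subset_Icc_left one_le_two) fun k hk hk2 => ?_).symm
    obtain rfl : k = 1 := by grind
    simp [hg]
  have hpos : 0 < ∏ k ∈ Icc 2 n, g (k - 1) k := prod_pos fun k _ => by
    rw [hg]
    exact_mod_cast natCard_submodules_finrank_eq_pos F _ (by simp)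
  rw [hprod] at hcoeff
  exact ⟨natDegree_eq_of_le_of_coeff_ne_zero hle (hcoeff ▸ hpos.ne'), hcoeff⟩
end
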